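/- arXiv:1501.05345 — 7 statements merged into one kernel-verified Lean document; each statement's English description precedes it below -/
import Mathlib

section
/- For every real number α ≠ 0, every T > 0, and every digit ℓ ∈ {1,...,9}, the Lebesgue measure of the set {t ∈ [0,T] : the leading decimal digit of e^{αt} equals ℓ}, divided by T, differs from log₁₀(1 + 1/ℓ) by strictly less than 1/(|α|T). -/
open MeasureTheory Filter Set
open scoped Classical

/-- Base-`b` significand: `S_b(x) ∈ [1,b)` with `|x| = S_b(x)·b^k`; `S_b(0)=0`. -/
noncomputable def significand (b : ℕ) (x : ℝ) : ℝ :=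
  if x = 0 then 0 else |x| / (b : ℝ) ^ (Int.log b |x|)

/-- `f` is `b`-Benford. -/
noncomputable def IsBenford (b : ℕ) (f : ℝ → ℝ) : Prop :=
  ∀ s : ℝ, 1 ≤ s → s < (b : ℝ) →
    Tendsto (fun T : ℝ =>
        (volume {t : ℝ | 0 ≤ t ∧ t ≤ T ∧ significand b (f t) ≤ s}).toReal / T)
      atTop (nhds (Real.logb b s))

/-- A subset of the circle `ℝ/ℤ` is an arc if it is the image of an interval. -/
def IsArc (J : Set UnitAddCircle) : Prop :=
  ∃ a c : ℝ, J = (fun x : ℝ => (x : UnitAddCircle)) '' Set.Ico a c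

/-- `f` is continuously uniformly distributed mod 1. -/
noncomputable def CUDMod1 (f : ℝ → ℝ) : Prop :=
  ∀ J : Set UnitAddCircle, IsArc J →
    Tendsto (fun T : ℝ =>
        (volume {t : ℝ | 0 ≤ t ∧ t ≤ T ∧ ((f t : UnitAddCircle) ∈ J)}).toReal / T)
      atTop (nhds ((volume J).toReal))

/-- A sequence (indexed from 1) is uniformly distributed mod 1. -/
noncomputable def UDMod1 (x : ℕ → ℝ) : Prop :=
  ∀ J : Set UnitAddCircle, IsArc J →
    Tendsto (fun N : ℕ =>
        ((Finset.Icc 1 N).filter (fun n => ((x n : UnitAddCircle) ∈ J))).card / (N : ℝ))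
      atTop (nhds ((volume J).toReal))

/-- The set `Δ_W` associated with `W ⊆ ℂ`. -/
noncomputable def deltaSet (W : Set ℂ) : Set ℝ :=
  {x | ∃ z ∈ W, ∃ w ∈ W, x = 1 + (Complex.arg z - Complex.arg w) / (2 * Real.pi)}

/-- `W ⊆ ℂ` is `b`-nonresonant. -/
noncomputable def BNonresonant (b : ℕ) (W : Set ℂ) : Prop :=
  ∀ r : ℝ, 0 < r → (W ∩ {z | ‖z‖ = r}).Nonempty →
    (deltaSet (W ∩ {z | ‖z‖ = r}) ∩ Set.range ((↑) : ℚ → ℝ) = {1}) ∧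
    Real.logb b r ∉ Submodule.span ℚ (deltaSet (W ∩ {z | ‖z‖ = r}))

/-- `Z ⊆ ℂ` is exponentially `b`-nonresonant. -/
noncomputable def ExpBNonresonant (b : ℕ) (Z : Set ℂ) : Prop :=
  ∃ t : ℝ, 0 ≤ t ∧ BNonresonant b ((fun z => Complex.exp (t * z)) '' Z)

/-- The spectrum (set of complex eigenvalues) of a real square matrix. -/
noncomputable def realSpectrum {d : ℕ} (A : Matrix (Fin d) (Fin d) ℝ) : Set ℂ :=
  spectrum ℂ (A.map (algebraMap ℝ ℂ))


/-! With `β = α / log 10`, the leading digit of `e^{αt}` is `ℓ` exactly when the fractional part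
of `βt` lies in `[log₁₀ ℓ, log₁₀ (ℓ + 1))`, an interval of length `δ = log₁₀ (1 + 1/ℓ)`. The
indicator of this event is a `1`-periodic function of `βt` with mean `δ`, so its primitive `G`
lies between its values `⌊x⌋ δ` and `(⌊x⌋ + 1) δ` at the neighbouring integers, whence
`|G x - δ x| ≤ δ`. Substituting `s = βt`, the measure in question is `G (βT) / β`, which is within
`δ / |β| = log (1 + 1/ℓ) / |α| < 1 / |α|` of `δ T`. -/

namespace Function.Periodic

theorem abs_intervalIntegral_sub_div_mul_le {g : ℝ → ℝ} {p : ℝ} (hg : Periodic g p) (hp : 0 < p)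
    (hg_nonneg : 0 ≤ g) (h_int : IntervalIntegrable g volume 0 p) (t : ℝ) :
    |(∫ x in 0..t, g x) - t / p * ∫ x in 0..p, g x| ≤ ∫ x in 0..p, g x := by
  set I := ∫ x in 0..p, g x
  have h_int' := hg.intervalIntegrable₀ hp.ne' h_int
  have hI : 0 ≤ I := intervalIntegral.integral_nonneg hp.le fun x _ => hg_nonneg x
  have h_period_mul (n : ℤ) : ∫ x in 0..n * p, g x = n * I := by
    simpa using hg.intervalIntegral_add_zsmul_eq n 0 h_int'
  have h_mono : Monotone fun s => ∫ x in 0..s, g x := fun a b hab => by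
    dsimp only
    rw [← intervalIntegral.integral_add_adjacent_intervals (h_int' 0 a) (h_int' a b)]
    exact le_add_of_nonneg_right (intervalIntegral.integral_nonneg hab fun x _ => hg_nonneg x)
  set n := ⌊t / p⌋
  have h_lo : (n : ℝ) ≤ t / p := Int.floor_le _
  have h_hi : t / p ≤ n + 1 := (Int.lt_floor_add_one _).le
  have h_lower := h_mono (show (n : ℝ) * p ≤ t from (le_div_iff₀ hp).1 h_lo)
  have h_upper := h_mono (show t ≤ ((n + 1 : ℤ) : ℝ) * p by
    push_cast; exact (div_le_iff₀ hp).1 h_hi)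
  simp only [h_period_mul] at h_lower h_upper
  push_cast at h_upper
  rw [abs_sub_le_iff]
  constructor <;> nlinarith

end Function.Periodic

theorem measureReal_Icc_inter_eq_intervalIntegral_indicator {A : Set ℝ} (hA : MeasurableSet A)
    {a b : ℝ} (hab : a ≤ b) :
    volume.real (Icc a b ∩ A) = ∫ t in a..b, A.indicator 1 t := by
  rw [intervalIntegral.integral_of_le hab, integral_indicator_one hA,
    measureReal_restrict_apply hA, inter_comm]
  exact measureReal_congr ((ae_eq_refl A).inter Ioc_ae_eq_Icc).symm

theorem intervalIntegral_indicator_fract_mem_Ico {c d : ℝ} (hc : 0 ≤ c) (hcd : c ≤ d)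
    (hd : d ≤ 1) :
    ∫ x in 0..1, {x : ℝ | Int.fract x ∈ Ico c d}.indicator 1 x = d - c := by
  have hS : MeasurableSet {x : ℝ | Int.fract x ∈ Ico c d} := measurable_fract measurableSet_Ico
  have h_inter : {x : ℝ | Int.fract x ∈ Ico c d} ∩ Ico 0 1 = Ico c d := by
    ext x
    constructor
    · rintro ⟨hx, hx01⟩
      rwa [mem_ofPred_eq, Int.fract_eq_self.2 hx01] at hx
    · intro hx
      have hx01 : x ∈ Ico (0 : ℝ) 1 := ⟨hc.trans hx.1, hx.2.trans_le hd⟩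
      exact ⟨by rwa [mem_ofPred_eq, Int.fract_eq_self.2 hx01], hx01⟩
  rw [intervalIntegral.integral_of_le zero_le_one, ← integral_Ico_eq_integral_Ioc,
    integral_indicator_one hS, measureReal_restrict_apply hS, h_inter,
    Real.volume_real_Ico_of_le hcd]

theorem abs_measureReal_fract_mul_mem_Ico_sub_le {β : ℝ} (hβ : β ≠ 0) {T : ℝ} (hT : 0 ≤ T)
    {c d : ℝ} (hc : 0 ≤ c) (hcd : c ≤ d) (hd : d ≤ 1) :
    |volume.real {t | 0 ≤ t ∧ t ≤ T ∧ Int.fract (β * t) ∈ Ico c d} - (d - c) * T|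
      ≤ (d - c) / |β| := by
  set S := {x : ℝ | Int.fract x ∈ Ico c d}
  have hS : MeasurableSet S := measurable_fract measurableSet_Ico
  have h_periodic : Function.Periodic (S.indicator (1 : ℝ → ℝ)) 1 := fun x => by
    simp only [S, indicator, mem_ofPred_eq, Int.fract_add_one, Pi.one_apply]
  have h_int : IntervalIntegrable (S.indicator (1 : ℝ → ℝ)) volume 0 1 :=
    ((integrableOn_const isCompact_uIcc.measure_lt_top.ne).indicator hS).intervalIntegrable
  have h_bound := h_periodic.abs_intervalIntegral_sub_div_mul_le one_pos
    (indicator_nonneg fun _ _ => zero_le_one) h_int (β * T)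
  rw [intervalIntegral_indicator_fract_mem_Ico hc hcd hd, div_one] at h_bound
  have h_vol : volume.real {t | 0 ≤ t ∧ t ≤ T ∧ Int.fract (β * t) ∈ Ico c d}
      = β⁻¹ * ∫ x in 0..β * T, S.indicator 1 x := by
    have h_subst := intervalIntegral.integral_comp_mul_left (a := 0) (b := T)
      (S.indicator (1 : ℝ → ℝ)) hβ
    rw [mul_zero, smul_eq_mul] at h_subst
    rw [← h_subst]
    convert measureReal_Icc_inter_eq_intervalIntegral_indicator (measurable_const_mul β hS) hT
      using 2
    · exact Set.ext fun t => and_assoc.symm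
    · rfl
  rw [h_vol, le_div_iff₀ (abs_pos.2 hβ), ← abs_mul]
  calc |((β⁻¹ * ∫ x in 0..β * T, S.indicator 1 x) - (d - c) * T) * β|
      = |(∫ x in 0..β * T, S.indicator 1 x) - β * T * (d - c)| := by
        congr 1; field_simp
    _ ≤ d - c := h_bound

theorem significand_eq_rpow_fract_logb {b : ℕ} (hb : 1 < b) {x : ℝ} (hx : x ≠ 0) :
    significand b x = (b : ℝ) ^ Int.fract (Real.logb b x) := by
  have hb' : (1 : ℝ) < b := by exact_mod_cast hb
  rw [significand, if_neg hx, ← Real.logb_abs, ← Real.floor_logb_natCast (abs_nonneg x),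
    Int.fract, Real.rpow_sub (by positivity), Real.rpow_intCast,
    Real.rpow_logb (by positivity) hb'.ne' (abs_pos.2 hx)]

theorem floor_rpow_eq_natCast_iff {b : ℝ} (hb : 1 < b) {ℓ : ℕ} (hℓ : 0 < ℓ) (y : ℝ) :
    ⌊b ^ y⌋ = (ℓ : ℤ) ↔ y ∈ Ico (Real.logb b ℓ) (Real.logb b (ℓ + 1)) := by
  rw [Int.floor_eq_iff, mem_Ico, Real.logb_le_iff_le_rpow hb (by positivity),
    Real.lt_logb_iff_rpow_lt hb (by positivity)]
  push_cast
  rfl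

/-- explicit error bound for the first-digit law of `e^{αt}`. -/
theorem exp_leadingDigit_bound (α : ℝ) (hα : α ≠ 0) (T : ℝ) (hT : 0 < T)
    (ℓ : ℕ) (h1 : 1 ≤ ℓ) (h9 : ℓ ≤ 9) :
    |(volume {t : ℝ | 0 ≤ t ∧ t ≤ T ∧
        ⌊significand 10 (Real.exp (α * t))⌋ = (ℓ : ℤ)}).toReal / T
      - Real.logb 10 (1 + 1 / (ℓ : ℝ))| < 1 / (|α| * T) := by
  have hℓ : (1 : ℝ) ≤ ℓ := by exact_mod_cast h1
  have hℓ9 : (ℓ : ℝ) + 1 ≤ 10 := by exact_mod_cast Nat.succ_le_succ h9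
  have hlog10 : 0 < Real.log 10 := Real.log_pos (by norm_num)
  have h_digit (t : ℝ) : ⌊significand 10 (Real.exp (α * t))⌋ = (ℓ : ℤ) ↔
      Int.fract (α / Real.log 10 * t) ∈ Ico (Real.logb 10 ℓ) (Real.logb 10 (ℓ + 1)) := by
    rw [significand_eq_rpow_fract_logb (by norm_num) (Real.exp_pos _).ne',
      Real.logb, Real.log_exp, div_mul_eq_mul_div]
    exact_mod_cast floor_rpow_eq_natCast_iff (by norm_num) h1 _
  have h_width : Real.logb 10 (ℓ + 1) - Real.logb 10 ℓ = Real.logb 10 (1 + 1 / ℓ) := by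
    rw [← Real.logb_div (by positivity) (by positivity), add_div, div_self (by positivity)]
  have h_bound := abs_measureReal_fract_mul_mem_Ico_sub_le
    (div_ne_zero hα hlog10.ne') hT.le (Real.logb_nonneg (by norm_num) hℓ)
    (Real.logb_le_logb_of_le (by norm_num) (by positivity) (by linarith))
    ((Real.logb_le_logb_of_le (by norm_num) (by positivity) hℓ9).trans_eq
      (Real.logb_self_eq_one (by norm_num)))
  rw [h_width] at h_bound
  simp only [h_digit, ← measureReal_def]
  have h_err : Real.logb 10 (1 + 1 / ℓ) / |α / Real.log 10| < 1 / |α| := by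
    have h_inv : 1 / (ℓ : ℝ) ≤ 1 := (div_le_one (by positivity)).2 hℓ
    have h_log : Real.log (1 + 1 / ℓ) < 1 := by
      refine (Real.log_lt_sub_one_of_pos (by positivity) ?_).trans_le (by linarith)
      simp only [ne_eq, add_eq_left, one_div, inv_eq_zero, Nat.cast_eq_zero]
      omega
    rw [abs_div, abs_of_pos hlog10, Real.logb, div_div_div_cancel_right₀ hlog10.ne']
    gcongr
  rw [← div_div, div_sub' hT.ne', abs_div, abs_of_pos hT, div_lt_div_iff_of_pos_right hT,
    mul_comm T]
  exact h_bound.trans_lt h_err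
end

section
/- If f : ℝ≥0 → ℝ is measurable and c.u.d. mod 1, and g : ℝ≥0 → ℝ is measurable with lim_{t→∞}(g(t) − f(t)) existing in ℝ, then g is c.u.d. mod 1. -/
open MeasureTheory Filter Set
open scoped Classical

/-!
Write `J = [a, c)` mod 1. Once `|g t - f t - L| ≤ ε`, the value `g t` lies in `J` whenever `f t`
lies in the arc `[a - L + ε, c - L - ε)`, and `f t` lies in `[a - L - ε, c - L + ε)` whenever
`g t` lies in `J`. Up to the bounded time before this happens, the occupation time of `g` in `J`
is therefore squeezed between those of `f` in two arcs whose lengths tend to that of `J` as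
`ε → 0`, and the c.u.d. property of `f` controls both.
-/

open Topology

def arc (a c : ℝ) : Set UnitAddCircle := (fun x : ℝ => (x : UnitAddCircle)) '' Ico a c

lemma UnitAddCircle.volume_singleton (z : UnitAddCircle) : volume {z} = 0 := by
  simpa using AddCircle.volume_closedBall (T := 1) (x := z) 0

lemma UnitAddCircle.volume_image_Ioc {a c : ℝ} (hc : c ≤ a + 1) :
    volume ((fun x : ℝ => (x : UnitAddCircle)) '' Ioc a c) = ENNReal.ofReal (c - a) := by
  have hpre : (fun x : ℝ => (x : UnitAddCircle)) '' Ioc a c =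
      AddCircle.measurableEquivIoc 1 a ⁻¹' {x | x.1 ≤ c} := by
    ext z
    constructor
    · rintro ⟨x, hx, rfl⟩
      show (AddCircle.equivIoc 1 a x).1 ≤ c
      rw [AddCircle.equivIoc_coe_eq ⟨hx.1, hx.2.trans hc⟩]
      exact hx.2
    · intro hz
      exact ⟨_, ⟨(AddCircle.measurableEquivIoc 1 a z).2.1, hz⟩,
        (AddCircle.equivIoc 1 a).symm_apply_apply z⟩
  have himage : Subtype.val '' {x : Ioc a (a + 1) | x.1 ≤ c} = Ioc a c := by
    ext x
    simp only [mem_image, Subtype.exists, mem_Ioc, exists_and_right, exists_eq_right]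
    exact ⟨fun ⟨⟨h1, _⟩, h2⟩ => ⟨h1, h2⟩, fun ⟨h1, h2⟩ => ⟨⟨h1, h2.trans hc⟩, h2⟩⟩
  rw [hpre, MeasurePreserving.measure_preimage_equiv (f := AddCircle.measurableEquivIoc 1 a)
    (AddCircle.measurePreserving_equivIoc 1), comap_subtype_coe_apply measurableSet_Ioc,
    himage, Real.volume_Ioc]

lemma volume_arc_of_le {a c : ℝ} (hc : c ≤ a + 1) :
    volume (arc a c) = ENNReal.ofReal (c - a) := by
  rw [← UnitAddCircle.volume_image_Ioc hc]
  apply le_antisymm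
  · calc volume (arc a c)
        ≤ volume ((fun x : ℝ => (x : UnitAddCircle)) '' Ioc a c ∪ {(a : UnitAddCircle)}) := by
          refine measure_mono ?_
          rintro _ ⟨x, hx, rfl⟩
          rcases hx.1.eq_or_lt with rfl | hax
          · exact Or.inr rfl
          · exact Or.inl ⟨x, ⟨hax, hx.2.le⟩, rfl⟩
      _ ≤ _ :=
        (measure_union_le (μ := volume) _ _).trans (by simp [UnitAddCircle.volume_singleton])
  · calc volume ((fun x : ℝ => (x : UnitAddCircle)) '' Ioc a c)
        ≤ volume (arc a c ∪ {(c : UnitAddCircle)}) := by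
          refine measure_mono ?_
          rintro _ ⟨x, hx, rfl⟩
          rcases hx.2.eq_or_lt with rfl | hxc
          · exact Or.inr rfl
          · exact Or.inl ⟨x, ⟨hx.1.le, hxc⟩, rfl⟩
      _ ≤ _ :=
        (measure_union_le (μ := volume) _ _).trans (by simp [UnitAddCircle.volume_singleton])

/-- `ENNReal.ofReal` truncates at `0`, so this also covers the empty arcs `c ≤ a`. -/
lemma volume_arc (a c : ℝ) : volume (arc a c) = ENNReal.ofReal (min (c - a) 1) := by
  rcases le_total c (a + 1) with hc | hc
  · rw [volume_arc_of_le hc, min_eq_left (by linarith)]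
  · rw [min_eq_right (by linarith), ENNReal.ofReal_one, ← UnitAddCircle.measure_univ]
    refine le_antisymm (measure_mono (subset_univ _)) ?_
    calc volume univ = volume (arc a (a + 1)) := by
          simp [volume_arc_of_le le_rfl]
      _ ≤ volume (arc a c) := measure_mono (image_mono (Ico_subset_Ico_right hc))

lemma tendsto_volume_arc_toReal {ι : Type*} {l : Filter ι} {u w : ι → ℝ} {a c : ℝ}
    (h : Tendsto (fun i => w i - u i) l (𝓝 (c - a))) :
    Tendsto (fun i => (volume (arc (u i) (w i))).toReal) l (𝓝 (volume (arc a c)).toReal) := by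
  simp only [volume_arc, ENNReal.toReal_ofReal']
  exact (h.min tendsto_const_nhds).max tendsto_const_nhds

lemma mem_arc_of_abs_sub_le {a c a' c' x y d δ : ℝ} (hx : (x : UnitAddCircle) ∈ arc a c)
    (hxy : |y - x - d| ≤ δ) (ha : a' ≤ a + d - δ) (hc : c + d + δ ≤ c') :
    (y : UnitAddCircle) ∈ arc a' c' := by
  obtain ⟨x', hx', hxx'⟩ := hx
  obtain ⟨h₁, h₂⟩ := abs_le.1 hxy
  refine ⟨x' + (y - x), ⟨by linarith [hx'.1], by linarith [hx'.2]⟩, ?_⟩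
  simp only [AddCircle.coe_add, AddCircle.coe_sub, hxx', add_sub_cancel]

lemma eventually_mem_arc_of_tendsto_sub {f g : ℝ → ℝ} {L ε a c a' c' : ℝ}
    (hlim : Tendsto (fun t => g t - f t) atTop (𝓝 L)) (hε : 0 < ε)
    (ha : a' ≤ a + L - ε) (hc : c + L + ε ≤ c') :
    ∀ᶠ t in atTop, (f t : UnitAddCircle) ∈ arc a c → (g t : UnitAddCircle) ∈ arc a' c' := by
  filter_upwards [Metric.tendsto_nhds.1 hlim ε hε] with t ht hft
  exact mem_arc_of_abs_sub_le hft (by rw [← Real.dist_eq]; exact ht.le) ha hc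

noncomputable def occupationTime (f : ℝ → ℝ) (J : Set UnitAddCircle) (T : ℝ) : ℝ :=
  (volume {t : ℝ | 0 ≤ t ∧ t ≤ T ∧ (f t : UnitAddCircle) ∈ J}).toReal

lemma exists_occupationTime_le_add {f g : ℝ → ℝ} {J K : Set UnitAddCircle}
    (h : ∀ᶠ t in atTop, (f t : UnitAddCircle) ∈ J → (g t : UnitAddCircle) ∈ K) :
    ∃ C, ∀ T, occupationTime f J T ≤ occupationTime g K T + C := by
  obtain ⟨T₀, hT₀⟩ := eventually_atTop.1 h
  refine ⟨max T₀ 0, fun T => ?_⟩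
  have hsub : {t : ℝ | 0 ≤ t ∧ t ≤ T ∧ (f t : UnitAddCircle) ∈ J} ⊆
      {t : ℝ | 0 ≤ t ∧ t ≤ T ∧ (g t : UnitAddCircle) ∈ K} ∪ Icc 0 (max T₀ 0) := by
    rintro t ⟨ht₀, htT, hft⟩
    rcases le_total t (max T₀ 0) with ht | ht
    · exact Or.inr ⟨ht₀, ht⟩
    · exact Or.inl ⟨ht₀, htT, hT₀ t (le_of_max_le_left ht) hft⟩
  have hfin : volume {t : ℝ | 0 ≤ t ∧ t ≤ T ∧ (g t : UnitAddCircle) ∈ K} ≠ ⊤ :=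
    ((measure_mono fun t ht => (⟨ht.1, ht.2.1⟩ : t ∈ Icc 0 T)).trans_lt measure_Icc_lt_top).ne
  calc occupationTime f J T
      ≤ (volume {t : ℝ | 0 ≤ t ∧ t ≤ T ∧ (g t : UnitAddCircle) ∈ K} +
          volume (Icc 0 (max T₀ 0))).toReal :=
        ENNReal.toReal_mono (ENNReal.add_ne_top.2 ⟨hfin, measure_Icc_lt_top.ne⟩)
          ((measure_mono hsub).trans (measure_union_le _ _))
    _ = occupationTime g K T + max T₀ 0 := by
        rw [ENNReal.toReal_add hfin measure_Icc_lt_top.ne, Real.volume_Icc, sub_zero,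
          ENNReal.toReal_ofReal (le_max_right _ _), occupationTime]

section Bounds

variable {f g : ℝ → ℝ} {J K : Set UnitAddCircle} {v b : ℝ}

lemma eventually_lt_occupationTime_div
    (h : ∀ᶠ t in atTop, (f t : UnitAddCircle) ∈ J → (g t : UnitAddCircle) ∈ K)
    (hf : Tendsto (fun T => occupationTime f J T / T) atTop (𝓝 v)) (hb : b < v) :
    ∀ᶠ T in atTop, b < occupationTime g K T / T := by
  obtain ⟨C, hC⟩ := exists_occupationTime_le_add h
  have hlow : Tendsto (fun T => occupationTime f J T / T - C / T) atTop (𝓝 v) := by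
    simpa using hf.sub (tendsto_id.const_div_atTop C)
  filter_upwards [hlow.eventually (lt_mem_nhds hb), eventually_gt_atTop 0] with T hT hTpos
  calc b < occupationTime f J T / T - C / T := hT
    _ ≤ occupationTime g K T / T := by
        rw [← sub_div, div_le_div_iff_of_pos_right hTpos]; linarith [hC T]

lemma eventually_occupationTime_div_lt
    (h : ∀ᶠ t in atTop, (g t : UnitAddCircle) ∈ K → (f t : UnitAddCircle) ∈ J)
    (hf : Tendsto (fun T => occupationTime f J T / T) atTop (𝓝 v)) (hb : v < b) :
    ∀ᶠ T in atTop, occupationTime g K T / T < b := by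
  obtain ⟨C, hC⟩ := exists_occupationTime_le_add h
  have hup : Tendsto (fun T => occupationTime f J T / T + C / T) atTop (𝓝 v) := by
    simpa using hf.add (tendsto_id.const_div_atTop C)
  filter_upwards [hup.eventually (gt_mem_nhds hb), eventually_gt_atTop 0] with T hT hTpos
  calc occupationTime g K T / T ≤ occupationTime f J T / T + C / T := by
        rw [← add_div, div_le_div_iff_of_pos_right hTpos]; exact hC T
    _ < b := hT

end Bounds

section Arcs

variable {f g : ℝ → ℝ} {L a c b : ℝ}

lemma eventually_lt_occupationTime_arc_div_of_tendsto_sub (hcud : CUDMod1 f)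
    (hlim : Tendsto (fun t => g t - f t) atTop (𝓝 L)) (hb : b < (volume (arc a c)).toReal) :
    ∀ᶠ T in atTop, b < occupationTime g (arc a c) T / T := by
  have hshrink : Tendsto (fun ε => (volume (arc (a - L + ε) (c - L - ε))).toReal) (𝓝[>] 0)
      (𝓝 (volume (arc a c)).toReal) :=
    tendsto_volume_arc_toReal
      (((by fun_prop : Continuous fun ε : ℝ => c - L - ε - (a - L + ε)).tendsto' 0 (c - a)
        (by ring)).mono_left nhdsWithin_le_nhds)
  obtain ⟨ε, hbε, hε⟩ := ((hshrink.eventually (lt_mem_nhds hb)).and self_mem_nhdsWithin).exists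
  exact eventually_lt_occupationTime_div
    (eventually_mem_arc_of_tendsto_sub (a := a - L + ε) (c := c - L - ε) hlim hε
      (by linarith) (by linarith))
    (hcud _ ⟨_, _, rfl⟩) hbε

lemma eventually_occupationTime_arc_div_lt_of_tendsto_sub (hcud : CUDMod1 f)
    (hlim : Tendsto (fun t => g t - f t) atTop (𝓝 L)) (hb : (volume (arc a c)).toReal < b) :
    ∀ᶠ T in atTop, occupationTime g (arc a c) T / T < b := by
  have hgrow : Tendsto (fun ε => (volume (arc (a - L - ε) (c - L + ε))).toReal) (𝓝[>] 0)
      (𝓝 (volume (arc a c)).toReal) :=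
    tendsto_volume_arc_toReal
      (((by fun_prop : Continuous fun ε : ℝ => c - L + ε - (a - L - ε)).tendsto' 0 (c - a)
        (by ring)).mono_left nhdsWithin_le_nhds)
  obtain ⟨ε, hbε, hε⟩ := ((hgrow.eventually (gt_mem_nhds hb)).and self_mem_nhdsWithin).exists
  have hlim' : Tendsto (fun t => f t - g t) atTop (𝓝 (-L)) := by simpa using hlim.neg
  exact eventually_occupationTime_div_lt
    (eventually_mem_arc_of_tendsto_sub (a' := a - L - ε) (c' := c - L + ε) hlim' hε
      (by linarith) (by linarith))
    (hcud _ ⟨_, _, rfl⟩) hbε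

end Arcs

theorem cud_of_tendsto_sub_general (f g : ℝ → ℝ)
    (hcud : CUDMod1 f) (L : ℝ)
    (hlim : Filter.Tendsto (fun t => g t - f t) Filter.atTop (nhds L)) :
    CUDMod1 g := by
  rintro J ⟨a, c, rfl⟩
  exact tendsto_order.2
    ⟨fun _ hb => eventually_lt_occupationTime_arc_div_of_tendsto_sub hcud hlim hb,
      fun _ hb => eventually_occupationTime_arc_div_lt_of_tendsto_sub hcud hlim hb⟩

/-- c.u.d. mod 1 is stable under perturbations with a finite limit. -/
theorem cud_of_tendsto_sub (f g : ℝ → ℝ) (hf : Measurable f) (hg : Measurable g)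
    (hcud : CUDMod1 f) (L : ℝ)
    (hlim : Filter.Tendsto (fun t => g t - f t) Filter.atTop (nhds L)) :
    CUDMod1 g :=
  cud_of_tendsto_sub_general f g hcud L hlim
end

section
/- Let f : ℝ≥0 → ℝ be measurable and δ₀ > 0. If for almost all δ ∈ (0, δ₀) the sequence (f(nδ))_{n≥1} is uniformly distributed mod 1, then f is c.u.d. mod 1. -/
open MeasureTheory Filter Set
open scoped Classical

lemma measurableSet_coe_preimage_arc {J : Set UnitAddCircle}
    (hJ : IsArc J) :
    MeasurableSet (((↑) : ℝ → UnitAddCircle) ⁻¹' J) := by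
  obtain ⟨a, c, rfl⟩ := hJ
  have hset : ((↑) : ℝ → UnitAddCircle) ⁻¹' ((fun x : ℝ => (x : UnitAddCircle)) '' Set.Ico a c)
      = ⋃ k : ℤ, (fun x : ℝ => x - (k : ℝ)) ⁻¹' Set.Ico a c := by
    ext x
    simp only [mem_preimage, mem_image, mem_iUnion]
    constructor
    · rintro ⟨y, hy, hxy⟩
      have hz : ((x - y : ℝ) : UnitAddCircle) = 0 := by
        have : ((x : ℝ) : UnitAddCircle) = (y : ℝ) := hxy.symm
        rw [AddCircle.coe_sub, this, sub_self]
      obtain ⟨k, hk⟩ := (AddCircle.coe_eq_zero_iff _).1 hz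
      refine ⟨k, ?_⟩
      have : (k : ℝ) = x - y := by simpa [zsmul_eq_mul] using hk
      simpa [this, sub_sub_cancel] using hy
    · rintro ⟨k, hk⟩
      refine ⟨x - k, hk, ?_⟩
      have : ((x - (k : ℝ) : ℝ) : UnitAddCircle) - (x : UnitAddCircle) = 0 := by
        rw [← AddCircle.coe_sub]
        have : (x - (k : ℝ)) - x = -(k : ℝ) := by ring
        rw [this]
        have := (AddCircle.coe_eq_zero_iff (p := (1:ℝ)) (x := -(k:ℝ))).2 ⟨-k, by push_cast [zsmul_eq_mul]; ring⟩
        exact this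
      exact sub_eq_zero.mp this
  rw [hset]
  exact MeasurableSet.iUnion fun k =>
    (measurableSet_Ico.preimage (measurable_id.sub_const _))

noncomputable def auxG (E : Set ℝ) (T : ℝ) : ℝ := (volume (E ∩ Set.Icc 0 T)).toReal

lemma auxG_nonneg (E : Set ℝ) (T : ℝ) : 0 ≤ auxG E T := ENNReal.toReal_nonneg

lemma auxG_fin (E : Set ℝ) (T : ℝ) : volume (E ∩ Set.Icc 0 T) ≠ ⊤ :=
  ((measure_mono inter_subset_right).trans_lt
    (by rw [Real.volume_Icc]; exact ENNReal.ofReal_lt_top)).ne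

lemma auxG_fin' (E : Set ℝ) (s t : ℝ) : volume (E ∩ Set.Ioc s t) ≠ ⊤ :=
  ((measure_mono inter_subset_right).trans_lt
    (by rw [Real.volume_Ioc]; exact ENNReal.ofReal_lt_top)).ne

lemma auxG_le (E : Set ℝ) {T : ℝ} (hT : 0 ≤ T) : auxG E T ≤ T := by
  rw [auxG]
  refine ENNReal.toReal_le_of_le_ofReal hT ?_
  refine (measure_mono inter_subset_right).trans (le_of_eq ?_)
  rw [Real.volume_Icc, sub_zero]

lemma auxG_diff (E : Set ℝ) (hE : MeasurableSet E) {s t : ℝ} (hs : 0 ≤ s) (hst : s ≤ t) :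
    (volume (E ∩ Set.Ioo s t)).toReal = auxG E t - auxG E s := by
  have h1 : volume (E ∩ Set.Ioo s t) = volume (E ∩ Set.Ioc s t) := by
    refine le_antisymm (measure_mono (inter_subset_inter_right _ Set.Ioo_subset_Ioc_self)) ?_
    calc volume (E ∩ Set.Ioc s t) ≤ volume ((E ∩ Set.Ioo s t) ∪ {t}) := by
          refine measure_mono ?_
          rintro x ⟨hxE, hx1, hx2⟩
          rcases eq_or_lt_of_le hx2 with h | h
          · exact Or.inr (by simp [h])
          · exact Or.inl ⟨hxE, hx1, h⟩
      _ ≤ volume (E ∩ Set.Ioo s t) + volume ({t} : Set ℝ) := measure_union_le _ _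
      _ = volume (E ∩ Set.Ioo s t) := by simp
  have h2 : (E ∩ Set.Icc 0 s) ∪ (E ∩ Set.Ioc s t) = E ∩ Set.Icc 0 t := by
    rw [← Set.inter_union_distrib_left, Set.Icc_union_Ioc_eq_Icc hs hst]
  have hdisj : Disjoint (E ∩ Set.Icc 0 s) (E ∩ Set.Ioc s t) := by
    refine Set.disjoint_left.2 ?_
    rintro x ⟨-, -, hx2⟩ ⟨-, hx3, -⟩
    exact absurd hx2 (not_le.2 hx3)
  have hm : volume (E ∩ Set.Icc 0 t) = volume (E ∩ Set.Icc 0 s) + volume (E ∩ Set.Ioc s t) := by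
    rw [← h2, measure_union hdisj (hE.inter measurableSet_Ioc)]
  rw [h1, auxG, auxG, hm, ENNReal.toReal_add (auxG_fin _ _) (auxG_fin' _ _ _)]
  ring

lemma auxG_mono (E : Set ℝ) (hE : MeasurableSet E) {s t : ℝ} (hs : 0 ≤ s) (hst : s ≤ t) :
    auxG E s ≤ auxG E t := by
  have := auxG_diff E hE hs hst
  have h0 : (0:ℝ) ≤ (volume (E ∩ Set.Ioo s t)).toReal := ENNReal.toReal_nonneg
  linarith

lemma auxG_lip (E : Set ℝ) (hE : MeasurableSet E) {s t : ℝ} (hs : 0 ≤ s) (hst : s ≤ t) :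
    auxG E t - auxG E s ≤ t - s := by
  rw [← auxG_diff E hE hs hst]
  have : volume (E ∩ Set.Ioo s t) ≤ ENNReal.ofReal (t - s) := by
    refine (measure_mono inter_subset_right).trans (le_of_eq ?_)
    rw [Real.volume_Ioo]
  exact ENNReal.toReal_le_of_le_ofReal (by linarith) this

lemma auxPhi_lip (E : Set ℝ) (hE : MeasurableSet E) {S T : ℝ} (hS : 0 < S) (hST : S ≤ T) :
    |auxG E T / T - auxG E S / S| ≤ (T - S) / S := by
  have hT : 0 < T := hS.trans_le hST
  have hx0 : 0 ≤ auxG E S := auxG_nonneg E S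
  have hxy : auxG E S ≤ auxG E T := auxG_mono E hE hS.le hST
  have hyx : auxG E T ≤ auxG E S + (T - S) := by have := auxG_lip E hE hS.le hST; linarith
  have hxS : auxG E S ≤ S := auxG_le E hS.le
  set x := auxG E S with hx
  set y := auxG E T with hy
  have hST' : (0:ℝ) < S * T := by positivity
  have e : y / T - x / S = (y * S - x * T) / (S * T) := by field_simp
  have e2 : (T - S) / S = ((T - S) * T) / (S * T) := by
    rw [div_eq_div_iff hS.ne' hST'.ne']; ring
  rw [e, e2, abs_div, abs_of_pos hST', div_le_div_iff_of_pos_right hST']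
  rw [abs_le]
  constructor
  · nlinarith [mul_le_mul_of_nonneg_right hxS (sub_nonneg.2 hST),
      mul_le_mul_of_nonneg_left hST hx0]
  · nlinarith [mul_le_mul_of_nonneg_right hyx hS.le,
      mul_le_mul_of_nonneg_left hST hx0,
      mul_le_mul_of_nonneg_right (sub_nonneg.2 hST) (sub_nonneg.2 hST)]

lemma aux_key (E : Set ℝ) (hE : MeasurableSet E) (δ₀ : ℝ) (hδ₀ : 0 < δ₀) (L : ℝ)
    (h : ∀ᵐ δ ∂(volume.restrict (Set.Ioo 0 δ₀)),
      Tendsto (fun N : ℕ =>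
          ((Finset.Icc 1 N).filter fun n : ℕ => (n : ℝ) * δ ∈ E).card / (N : ℝ))
        atTop (nhds L))
    {a : ℝ} (ha : 0 < a) (haδ : a < δ₀) :
    Tendsto (fun N : ℕ =>
        (∑ n ∈ Finset.Icc 1 N, (auxG E ((n : ℝ) * δ₀) - auxG E ((n : ℝ) * a)) / (n : ℝ)) / (N : ℝ))
      atTop (nhds (L * (δ₀ - a))) := by
  set μ := volume.restrict (Set.Ioo a δ₀) with hμ
  have hEn : ∀ n : ℕ, MeasurableSet ((fun δ : ℝ => (n : ℝ) * δ) ⁻¹' E) :=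
    fun n => hE.preimage (measurable_const_mul _)
  set F : ℕ → ℝ → ℝ := fun N δ =>
    (((Finset.Icc 1 N).filter fun n : ℕ => (n : ℝ) * δ ∈ E).card : ℝ) / (N : ℝ) with hF
  have hcard : ∀ (N : ℕ) (δ : ℝ), (((Finset.Icc 1 N).filter fun n : ℕ => (n : ℝ) * δ ∈ E).card : ℝ)
      = ∑ n ∈ Finset.Icc 1 N, if (n : ℝ) * δ ∈ E then (1:ℝ) else 0 := by
    intro N δ; exact Finset.natCast_card_filter _ _
  have hFmeas : ∀ N, AEStronglyMeasurable (F N) μ := by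
    intro N
    have hme : Measurable (fun δ : ℝ =>
        (((Finset.Icc 1 N).filter fun n : ℕ => (n : ℝ) * δ ∈ E).card : ℝ)) := by
      have : (fun δ : ℝ => (((Finset.Icc 1 N).filter fun n : ℕ => (n : ℝ) * δ ∈ E).card : ℝ))
          = fun δ => ∑ n ∈ Finset.Icc 1 N, if (n : ℝ) * δ ∈ E then (1:ℝ) else 0 := by
        funext δ; exact hcard N δ
      rw [this]
      exact Finset.measurable_sum _ fun n _ =>
        Measurable.ite (hEn n) measurable_const measurable_const
    exact (hme.div_const _).aestronglyMeasurable
  have hμfin : μ Set.univ < ⊤ := by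
    rw [hμ, Measure.restrict_apply_univ, Real.volume_Ioo]
    exact ENNReal.ofReal_lt_top
  have hbound_int : Integrable (fun _ : ℝ => (1:ℝ)) μ := integrable_const _
  have h_bound : ∀ N : ℕ, ∀ᵐ δ ∂μ, ‖F N δ‖ ≤ 1 := by
    intro N
    refine Filter.Eventually.of_forall fun δ => ?_
    rw [Real.norm_eq_abs, abs_of_nonneg (by positivity)]
    rcases Nat.eq_zero_or_pos N with hN | hN
    · simp [hF, hN]
    · have hle : (((Finset.Icc 1 N).filter fun n : ℕ => (n : ℝ) * δ ∈ E).card : ℝ) ≤ (N : ℝ) := by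
        have := Finset.card_filter_le (Finset.Icc 1 N) (fun n => (n : ℝ) * δ ∈ E)
        have h2 : (Finset.Icc 1 N).card = N := by rw [Nat.card_Icc]; omega
        exact_mod_cast h2 ▸ this
      rw [hF]
      rw [div_le_one (by exact_mod_cast hN)]
      exact hle
  have h_lim : ∀ᵐ δ ∂μ, Tendsto (fun N => F N δ) atTop (nhds L) := by
    refine ae_restrict_of_ae_restrict_of_subset (Set.Ioo_subset_Ioo ha.le le_rfl) h
  have hdct := MeasureTheory.tendsto_integral_of_dominated_convergence
    (fun _ => (1:ℝ)) hFmeas hbound_int h_bound h_lim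
  have hconst : ∫ _ : ℝ, L ∂μ = L * (δ₀ - a) := by
    rw [integral_const, measureReal_def, Measure.restrict_apply_univ, Real.volume_Ioo,
      ENNReal.toReal_ofReal (by linarith), smul_eq_mul, mul_comm]
  have hint : ∀ N : ℕ, ∫ δ, F N δ ∂μ
      = (∑ n ∈ Finset.Icc 1 N, (auxG E ((n : ℝ) * δ₀) - auxG E ((n : ℝ) * a)) / (n : ℝ)) / (N : ℝ) := by
    intro N
    have e1 : (fun δ => F N δ)
        = fun δ => (∑ n ∈ Finset.Icc 1 N, if (n : ℝ) * δ ∈ E then (1:ℝ) else 0) / (N : ℝ) := by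
      funext δ; exact congrArg (fun z : ℝ => z / (N:ℝ)) (hcard N δ)
    rw [e1, integral_div]
    congr 1
    have hintg : ∀ n ∈ Finset.Icc 1 N,
        Integrable (fun δ : ℝ => if (n : ℝ) * δ ∈ E then (1:ℝ) else 0) μ := by
      intro n _
      have : (fun δ : ℝ => if (n : ℝ) * δ ∈ E then (1:ℝ) else 0)
          = Set.indicator ((fun δ : ℝ => (n : ℝ) * δ) ⁻¹' E) (fun _ => (1:ℝ)) := by
        funext δ; simp [Set.indicator_apply, Set.mem_preimage]
      rw [this, integrable_indicator_iff (hEn n)]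
      exact integrableOn_const (lt_of_le_of_lt (measure_mono (Set.subset_univ _)) hμfin).ne
    rw [MeasureTheory.integral_finset_sum _ hintg]
    refine Finset.sum_congr rfl fun n hn => ?_
    have hn1 : 1 ≤ n := (Finset.mem_Icc.1 hn).1
    have hnR : (0:ℝ) < (n : ℝ) := by exact_mod_cast hn1
    have e2 : (fun δ : ℝ => if (n : ℝ) * δ ∈ E then (1:ℝ) else 0)
        = Set.indicator ((fun δ : ℝ => (n : ℝ) * δ) ⁻¹' E) (fun _ => (1:ℝ)) := by
      funext δ; simp [Set.indicator_apply, Set.mem_preimage]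
    rw [e2, MeasureTheory.integral_indicator_const _ (hEn n), hμ,
      measureReal_def, Measure.restrict_apply (hEn n)]
    have e3 : (fun δ : ℝ => (n : ℝ) * δ) ⁻¹' E ∩ Set.Ioo a δ₀
        = (fun δ : ℝ => (n : ℝ) * δ) ⁻¹' (E ∩ Set.Ioo ((n : ℝ) * a) ((n : ℝ) * δ₀)) := by
      ext δ
      simp only [Set.mem_inter_iff, Set.mem_preimage, Set.mem_Ioo]
      constructor
      · rintro ⟨h1, h2, h3⟩
        exact ⟨h1, by nlinarith, by nlinarith⟩
      · rintro ⟨h1, h2, h3⟩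
        refine ⟨h1, ?_, ?_⟩
        · nlinarith
        · nlinarith
    rw [e3, Real.volume_preimage_mul_left hnR.ne' _]
    have hfin : volume (E ∩ Set.Ioo ((n : ℝ) * a) ((n : ℝ) * δ₀)) ≠ ⊤ :=
      ((measure_mono inter_subset_right).trans_lt
        (by rw [Real.volume_Ioo]; exact ENNReal.ofReal_lt_top)).ne
    rw [ENNReal.toReal_mul, ENNReal.toReal_ofReal (by positivity)]
    rw [auxG_diff E hE (by positivity) (by nlinarith)]
    rw [smul_eq_mul, abs_of_pos (by positivity : (0:ℝ) < (n:ℝ)⁻¹)]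
    ring
  have : (fun N : ℕ => ∫ δ, F N δ ∂μ)
      = fun N : ℕ => (∑ n ∈ Finset.Icc 1 N,
        (auxG E ((n : ℝ) * δ₀) - auxG E ((n : ℝ) * a)) / (n : ℝ)) / (N : ℝ) := funext hint
  rw [this, hconst] at hdct
  exact hdct

lemma aux_cesaro (E : Set ℝ) (hE : MeasurableSet E) (δ₀ : ℝ) (hδ₀ : 0 < δ₀) (L : ℝ)
    (h : ∀ᵐ δ ∂(volume.restrict (Set.Ioo 0 δ₀)),
      Tendsto (fun N : ℕ =>
          ((Finset.Icc 1 N).filter fun n : ℕ => (n : ℝ) * δ ∈ E).card / (N : ℝ))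
        atTop (nhds L)) :
    Tendsto (fun N : ℕ =>
        (∑ n ∈ Finset.Icc 1 N, auxG E ((n : ℝ) * δ₀) / (n : ℝ)) / (N : ℝ))
      atTop (nhds (L * δ₀)) := by
  rw [Metric.tendsto_atTop]
  intro ε hε
  set a : ℝ := min (δ₀ / 2) (ε / (2 * (1 + |L|))) with ha_def
  have ha : 0 < a := lt_min (by positivity) (by positivity)
  have haδ : a < δ₀ := (min_le_left _ _).trans_lt (by linarith)
  have ha2 : a * (1 + |L|) ≤ ε / 2 := by
    have h1 : a ≤ ε / (2 * (1 + |L|)) := min_le_right _ _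
    have h2 : (0:ℝ) < 1 + |L| := by positivity
    rw [le_div_iff₀ (by positivity : (0:ℝ) < 2 * (1 + |L|))] at h1
    nlinarith
  obtain ⟨N₀, hN₀⟩ := (Metric.tendsto_atTop.1 (aux_key E hE δ₀ hδ₀ L h ha haδ)) (ε / 2)
    (by positivity)
  refine ⟨N₀, fun N hN => ?_⟩
  have h1 := hN₀ N hN
  set DN : ℝ := (∑ n ∈ Finset.Icc 1 N, auxG E ((n : ℝ) * a) / (n : ℝ)) / (N : ℝ) with hDN
  set SN : ℝ := (∑ n ∈ Finset.Icc 1 N,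
      (auxG E ((n : ℝ) * δ₀) - auxG E ((n : ℝ) * a)) / (n : ℝ)) / (N : ℝ) with hSN
  have hD0 : 0 ≤ DN := by
    refine div_nonneg (Finset.sum_nonneg fun n _ => ?_) (Nat.cast_nonneg N)
    exact div_nonneg (auxG_nonneg _ _) (Nat.cast_nonneg n)
  have hDa : DN ≤ a := by
    rcases Nat.eq_zero_or_pos N with hN0 | hN0
    · simp [hDN, hN0]; linarith
    · have hsum : (∑ n ∈ Finset.Icc 1 N, auxG E ((n : ℝ) * a) / (n : ℝ)) ≤ (N : ℝ) * a := by
        have : ∀ n ∈ Finset.Icc 1 N, auxG E ((n : ℝ) * a) / (n : ℝ) ≤ a := by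
          intro n hn
          have hn1 : (0:ℝ) < (n : ℝ) := by exact_mod_cast (Finset.mem_Icc.1 hn).1
          rw [div_le_iff₀ hn1]
          have := auxG_le E (T := (n:ℝ) * a) (by positivity)
          linarith [this]
        calc (∑ n ∈ Finset.Icc 1 N, auxG E ((n : ℝ) * a) / (n : ℝ))
            ≤ ∑ _n ∈ Finset.Icc 1 N, a := Finset.sum_le_sum this
          _ = (N : ℝ) * a := by
              rw [Finset.sum_const, Nat.card_Icc]
              simp [nsmul_eq_mul]
      rw [hDN, div_le_iff₀ (by exact_mod_cast hN0)]
      linarith [hsum]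
  have hsplit : (∑ n ∈ Finset.Icc 1 N, auxG E ((n : ℝ) * δ₀) / (n : ℝ)) / (N : ℝ) = SN + DN := by
    rw [hSN, hDN, ← add_div]
    congr 1
    rw [← Finset.sum_add_distrib]
    refine Finset.sum_congr rfl fun n _ => ?_
    ring
  rw [Real.dist_eq] at h1 ⊢
  rw [hsplit]
  have : SN + DN - L * δ₀ = (SN - L * (δ₀ - a)) + (DN - L * a) := by ring
  rw [this]
  calc |SN - L * (δ₀ - a) + (DN - L * a)| ≤ |SN - L * (δ₀ - a)| + |DN - L * a| := abs_add_le _ _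
    _ < ε / 2 + (a + |L| * a) := by
        refine add_lt_add_of_lt_of_le h1 ?_
        calc |DN - L * a| ≤ |DN| + |L * a| := abs_sub _ _
          _ ≤ a + |L| * a := by
              rw [abs_of_nonneg hD0, abs_mul, abs_of_pos ha]
              linarith
    _ ≤ ε / 2 + ε / 2 := by nlinarith
    _ = ε := by ring

set_option maxHeartbeats 1000000 in
lemma aux_tauber (u : ℕ → ℝ) (L : ℝ)
    (hm : Tendsto (fun N : ℕ => (∑ n ∈ Finset.Icc 1 N, u n) / (N : ℝ)) atTop (nhds L))
    (hlip : ∀ n M : ℕ, 1 ≤ n → n ≤ M → |u M - u n| ≤ ((M : ℝ) - n) / n) :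
    Tendsto u atTop (nhds L) := by
  rw [Metric.tendsto_atTop]
  intro ε hε
  set η : ℝ := ε ^ 2 / (4 * (8 + ε)) with hη_def
  have hη_pos : 0 < η := by positivity
  have hη_eq : η * (4 * (8 + ε)) = ε ^ 2 := by
    rw [hη_def, div_mul_cancel₀]
    positivity
  obtain ⟨N₁, hN₁⟩ := Metric.tendsto_atTop.1 hm η hη_pos
  refine ⟨max (max N₁ 1) (⌈(4:ℝ)/ε⌉₊ + 1), fun N hN => ?_⟩
  have hN1 : N₁ ≤ N := le_trans (le_trans (le_max_left _ _) (le_max_left _ _)) hN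
  have hNpos : 1 ≤ N := le_trans (le_trans (le_max_right _ _) (le_max_left _ _)) hN
  have hNR : (0:ℝ) < N := by exact_mod_cast hNpos
  have hNε : (4:ℝ) / ε < N := by
    have h1 : ⌈(4:ℝ)/ε⌉₊ + 1 ≤ N := le_trans (le_max_right _ _) hN
    have h2 : (4:ℝ)/ε ≤ (⌈(4:ℝ)/ε⌉₊ : ℝ) := Nat.le_ceil _
    have h3 : ((⌈(4:ℝ)/ε⌉₊ : ℕ) : ℝ) + 1 ≤ (N : ℝ) := by exact_mod_cast h1
    linarith
  set K : ℕ := ⌈(ε/4) * (N:ℝ)⌉₊ + 1 with hK_def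
  set M : ℕ := N + K with hM_def
  have hKpos : (0:ℝ) < K := by
    have : 1 ≤ K := Nat.le_add_left 1 _
    exact_mod_cast this
  have hKlb : (ε/4) * (N:ℝ) ≤ (K:ℝ) := by
    have h2 := Nat.le_ceil ((ε/4) * (N:ℝ))
    have : ((⌈(ε/4) * (N:ℝ)⌉₊ : ℕ) : ℝ) ≤ (K : ℝ) := by
      rw [hK_def]; push_cast; linarith
    linarith
  have hKub : (K:ℝ) ≤ (ε/4) * (N:ℝ) + 2 := by
    have h2 : (⌈(ε/4) * (N:ℝ)⌉₊ : ℝ) < (ε/4) * (N:ℝ) + 1 :=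
      Nat.ceil_lt_add_one (by positivity)
    rw [hK_def]; push_cast; linarith
  have hNM : N ≤ M := Nat.le_add_right _ _
  have hMR : (M:ℝ) = (N:ℝ) + (K:ℝ) := by rw [hM_def]; push_cast; ring
  have hMpos : (0:ℝ) < M := by rw [hMR]; linarith
  set S1 : ℝ := ∑ n ∈ Finset.Icc 1 N, u n with hS1
  set S2 : ℝ := ∑ n ∈ Finset.Icc 1 M, u n with hS2
  set B : ℝ := ∑ n ∈ Finset.Ioc N M, u n with hB_def
  have hB : S1 + B = S2 := by
    rw [hS1, hS2, hB_def]
    rw [show Finset.Icc 1 N = Finset.Ioc 0 N from by rw [← Finset.Icc_add_one_left_eq_Ioc, zero_add],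
      show Finset.Icc 1 M = Finset.Ioc 0 M from by rw [← Finset.Icc_add_one_left_eq_Ioc, zero_add]]
    exact Finset.sum_Ioc_consecutive u (Nat.zero_le N) hNM
  have hcardIoc : (Finset.Ioc N M).card = K := by rw [Nat.card_Ioc]; omega
  have hBu : |B - (K:ℝ) * u N| ≤ (K:ℝ) * ((K:ℝ) / (N:ℝ)) := by
    have e : B - (K:ℝ) * u N = ∑ n ∈ Finset.Ioc N M, (u n - u N) := by
      rw [Finset.sum_sub_distrib, Finset.sum_const, hcardIoc, nsmul_eq_mul, hB_def]
    rw [e]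
    calc |∑ n ∈ Finset.Ioc N M, (u n - u N)| ≤ ∑ n ∈ Finset.Ioc N M, |u n - u N| :=
          Finset.abs_sum_le_sum_abs _ _
      _ ≤ ∑ _n ∈ Finset.Ioc N M, (K:ℝ) / (N:ℝ) := by
          refine Finset.sum_le_sum fun n hn => ?_
          obtain ⟨hn1, hn2⟩ := Finset.mem_Ioc.1 hn
          refine (hlip N n hNpos hn1.le).trans ?_
          have hnK : (n:ℝ) - (N:ℝ) ≤ (K:ℝ) := by
            have : (n:ℝ) ≤ (M:ℝ) := by exact_mod_cast hn2
            rw [hMR] at this; linarith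
          gcongr
      _ = (K:ℝ) * ((K:ℝ) / (N:ℝ)) := by
          rw [Finset.sum_const, hcardIoc, nsmul_eq_mul]
  have habs1 : |u N - B / (K:ℝ)| ≤ (K:ℝ) / (N:ℝ) := by
    have e : u N - B / (K:ℝ) = ((K:ℝ) * u N - B) / (K:ℝ) := by
      field_simp
    rw [e, abs_div, abs_of_pos hKpos, div_le_iff₀ hKpos]
    rw [abs_sub_comm]
    calc |B - (K:ℝ) * u N| ≤ (K:ℝ) * ((K:ℝ) / (N:ℝ)) := hBu
      _ = (K:ℝ) / (N:ℝ) * (K:ℝ) := by ring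
  have hmN := hN₁ N hN1
  have hmM := hN₁ M (le_trans hN1 hNM)
  rw [Real.dist_eq] at hmN hmM
  have hBL : |B / (K:ℝ) - L| ≤ ((M:ℝ) * η + (N:ℝ) * η) / (K:ℝ) := by
    have e : B - (K:ℝ) * L = (M:ℝ) * (S2 / (M:ℝ) - L) - (N:ℝ) * (S1 / (N:ℝ) - L) := by
      have hB' : B = S2 - S1 := by linarith
      rw [hB']
      field_simp
      rw [hMR]
      ring
    have e2 : B / (K:ℝ) - L = (B - (K:ℝ) * L) / (K:ℝ) := by field_simp
    rw [e2, abs_div, abs_of_pos hKpos]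
    gcongr
    calc |B - (K:ℝ) * L| = |(M:ℝ) * (S2 / (M:ℝ) - L) - (N:ℝ) * (S1 / (N:ℝ) - L)| := by rw [e]
      _ ≤ |(M:ℝ) * (S2 / (M:ℝ) - L)| + |(N:ℝ) * (S1 / (N:ℝ) - L)| := abs_sub _ _
      _ = (M:ℝ) * |S2 / (M:ℝ) - L| + (N:ℝ) * |S1 / (N:ℝ) - L| := by
          rw [abs_mul, abs_mul, abs_of_pos hMpos, abs_of_pos hNR]
      _ ≤ (M:ℝ) * η + (N:ℝ) * η := by
          refine add_le_add ?_ ?_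
          · exact mul_le_mul_of_nonneg_left hmM.le hMpos.le
          · exact mul_le_mul_of_nonneg_left hmN.le hNR.le
  have hK_N : (K:ℝ) / (N:ℝ) ≤ ε/4 + 2/(N:ℝ) := by
    rw [div_le_iff₀ hNR]
    have e4 : (ε/4 + 2/(N:ℝ)) * (N:ℝ) = ε/4 * (N:ℝ) + 2 := by field_simp
    rw [e4]; linarith
  have h2N : 2/(N:ℝ) < ε/2 := by
    rw [div_lt_div_iff₀ hNR (by norm_num : (0:ℝ) < 2)]
    have h4 : (4:ℝ) < (N:ℝ) * ε := (div_lt_iff₀ hε).1 hNε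
    nlinarith
  have hηK : ((M:ℝ) * η + (N:ℝ) * η) / (K:ℝ) ≤ ε/4 := by
    rw [div_le_iff₀ hKpos]
    have hstep : ε * ((N:ℝ) * η) ≤ 4 * ((K:ℝ) * η) := by
      nlinarith [mul_le_mul_of_nonneg_right hKlb hη_pos.le]
    have hKeq : (K:ℝ) * (η * (4 * (8 + ε))) = (K:ℝ) * ε ^ 2 := by rw [hη_eq]
    rw [hMR]
    have hmul : (4*ε) * (((N:ℝ) + (K:ℝ)) * η + (N:ℝ) * η) ≤ (4*ε) * (ε/4 * (K:ℝ)) := by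
      have h8 : 8 * (ε * ((N:ℝ) * η)) ≤ 8 * (4 * ((K:ℝ) * η)) := by linarith
      ring_nf
      ring_nf at h8 hKeq
      linarith [h8, hKeq]
    exact le_of_mul_le_mul_left hmul (by positivity)
  rw [Real.dist_eq]
  calc |u N - L| ≤ |u N - B / (K:ℝ)| + |B / (K:ℝ) - L| := abs_sub_le _ _ _
    _ ≤ (K:ℝ)/(N:ℝ) + ((M:ℝ) * η + (N:ℝ) * η) / (K:ℝ) := add_le_add habs1 hBL
    _ ≤ (ε/4 + 2/(N:ℝ)) + ε/4 := add_le_add hK_N hηK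
    _ < ε := by linarith

lemma aux_main (E : Set ℝ) (hE : MeasurableSet E) (δ₀ : ℝ) (hδ₀ : 0 < δ₀) (L : ℝ)
    (h : ∀ᵐ δ ∂(volume.restrict (Set.Ioo 0 δ₀)),
      Tendsto (fun N : ℕ =>
          ((Finset.Icc 1 N).filter fun n : ℕ => (n : ℝ) * δ ∈ E).card / (N : ℝ))
        atTop (nhds L)) :
    Tendsto (fun T : ℝ => auxG E T / T) atTop (nhds L) := by
  set u : ℕ → ℝ := fun n => auxG E ((n:ℝ) * δ₀) / ((n:ℝ) * δ₀) with hu_def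
  have hces := aux_cesaro E hE δ₀ hδ₀ L h
  have hm : Tendsto (fun N : ℕ => (∑ n ∈ Finset.Icc 1 N, u n) / (N:ℝ)) atTop (nhds L) := by
    have h1 : Tendsto (fun N : ℕ =>
        ((∑ n ∈ Finset.Icc 1 N, auxG E ((n:ℝ)*δ₀) / (n:ℝ)) / (N:ℝ)) / δ₀)
        atTop (nhds ((L * δ₀) / δ₀)) := hces.div_const δ₀
    rw [mul_div_cancel_right₀ L hδ₀.ne'] at h1
    refine h1.congr fun N => ?_
    have e : ∀ n ∈ Finset.Icc 1 N, auxG E ((n:ℝ)*δ₀) / (n:ℝ) = u n * δ₀ := by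
      intro n hn
      have hn1 : (0:ℝ) < n := by exact_mod_cast (Finset.mem_Icc.1 hn).1
      rw [hu_def]
      field_simp
    rw [Finset.sum_congr rfl e, ← Finset.sum_mul]
    rcases Nat.eq_zero_or_pos N with hN0 | hN0
    · simp [hN0]
    · have hNR : (0:ℝ) < N := by exact_mod_cast hN0
      field_simp
  have hlip : ∀ n M : ℕ, 1 ≤ n → n ≤ M → |u M - u n| ≤ ((M:ℝ) - n)/n := by
    intro n M hn hnM
    have hnR : (0:ℝ) < (n:ℝ) := by exact_mod_cast hn
    have hn' : (0:ℝ) < (n:ℝ) * δ₀ := by positivity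
    have hMn : (n:ℝ) ≤ (M:ℝ) := by exact_mod_cast hnM
    have hnM' : (n:ℝ) * δ₀ ≤ (M:ℝ) * δ₀ := by nlinarith
    have e : ((M:ℝ)*δ₀ - (n:ℝ)*δ₀) / ((n:ℝ)*δ₀) = ((M:ℝ) - n)/n := by
      rw [div_eq_div_iff hn'.ne' hnR.ne']
      ring
    calc |u M - u n|
        = |auxG E ((M:ℝ)*δ₀)/((M:ℝ)*δ₀) - auxG E ((n:ℝ)*δ₀)/((n:ℝ)*δ₀)| := rfl
      _ ≤ ((M:ℝ)*δ₀ - (n:ℝ)*δ₀) / ((n:ℝ)*δ₀) := auxPhi_lip E hE hn' hnM'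
      _ = ((M:ℝ) - n)/n := e
  have huL : Tendsto u atTop (nhds L) := aux_tauber u L hm hlip
  have hNf : Tendsto (fun T : ℝ => ⌊T / δ₀⌋₊) atTop atTop :=
    tendsto_nat_floor_atTop.comp (Tendsto.atTop_div_const hδ₀ tendsto_id)
  have h1 : Tendsto (fun T : ℝ => u ⌊T / δ₀⌋₊) atTop (nhds L) := huL.comp hNf
  have h2 : Tendsto (fun T : ℝ => ((⌊T / δ₀⌋₊ : ℝ))⁻¹) atTop (nhds 0) :=
    tendsto_inv_atTop_zero.comp (tendsto_natCast_atTop_atTop.comp hNf)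
  have hev : ∀ᶠ T in atTop, ‖auxG E T / T - u ⌊T / δ₀⌋₊‖ ≤ ((⌊T / δ₀⌋₊ : ℝ))⁻¹ := by
    filter_upwards [eventually_ge_atTop δ₀] with T hT
    set N : ℕ := ⌊T / δ₀⌋₊ with hN
    have hTpos : 0 < T := lt_of_lt_of_le hδ₀ hT
    have hN1 : 1 ≤ N := by
      rw [hN]
      exact Nat.le_floor (by rw [Nat.cast_one, le_div_iff₀ hδ₀, one_mul]; exact hT)
    have hNpos : (0:ℝ) < N := by exact_mod_cast hN1
    have hS : (0:ℝ) < (N:ℝ) * δ₀ := by positivity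
    have hfl : ((N:ℕ):ℝ) ≤ T / δ₀ := by
      rw [hN]; exact Nat.floor_le (by positivity)
    have hlow : (N:ℝ) * δ₀ ≤ T := by
      calc (N:ℝ)*δ₀ ≤ (T/δ₀)*δ₀ := by nlinarith
        _ = T := by field_simp
    have hupp : T < ((N:ℝ)+1) * δ₀ := by
      have h3 : T / δ₀ < (N:ℝ) + 1 := by rw [hN]; exact Nat.lt_floor_add_one _
      calc T = (T/δ₀)*δ₀ := by field_simp
        _ < ((N:ℝ)+1)*δ₀ := by nlinarith
    have hl := auxPhi_lip E hE hS hlow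
    rw [Real.norm_eq_abs]
    refine hl.trans ?_
    have hTub : T - (N:ℝ)*δ₀ ≤ δ₀ := by nlinarith [hupp]
    calc (T - (N:ℝ)*δ₀) / ((N:ℝ)*δ₀) ≤ δ₀ / ((N:ℝ)*δ₀) := by gcongr
      _ = ((N:ℝ))⁻¹ := by
          rw [div_eq_iff hS.ne']
          field_simp
  have hf0 : Tendsto (fun T : ℝ => auxG E T / T - u ⌊T / δ₀⌋₊) atTop (nhds 0) :=
    squeeze_zero_norm' hev h2
  have hfin := hf0.add h1
  rw [zero_add] at hfin
  refine hfin.congr fun T => ?_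
  ring

/-- if the sequence `(f(nδ))` is u.d. mod 1 for a.e. `δ ∈ (0,δ₀)`,
then `f` is c.u.d. mod 1. -/
theorem cud_of_ae_ud (f : ℝ → ℝ) (hf : Measurable f) (δ₀ : ℝ) (hδ₀ : 0 < δ₀)
    (h : ∀ᵐ δ ∂(volume.restrict (Set.Ioo 0 δ₀)), UDMod1 (fun n : ℕ => f ((n : ℝ) * δ))) :
    CUDMod1 f := by
  intro J hJ
  have hpre : MeasurableSet (((↑) : ℝ → UnitAddCircle) ⁻¹' J) :=
    measurableSet_coe_preimage_arc hJ
  have hE : MeasurableSet {t : ℝ | ((f t : UnitAddCircle) ∈ J)} := hf hpre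
  have h' : ∀ᵐ δ ∂(volume.restrict (Set.Ioo 0 δ₀)),
      Tendsto (fun N : ℕ =>
          ((Finset.Icc 1 N).filter
            fun n : ℕ => (n : ℝ) * δ ∈ {t : ℝ | ((f t : UnitAddCircle) ∈ J)}).card / (N : ℝ))
        atTop (nhds ((volume J).toReal)) := by
    filter_upwards [h] with δ hδ
    exact hδ J hJ
  have hmain := aux_main {t : ℝ | ((f t : UnitAddCircle) ∈ J)} hE δ₀ hδ₀
    ((volume J).toReal) h'
  refine hmain.congr fun T => ?_
  rw [auxG]
  congr 3
  ext t
  simp only [Set.mem_inter_iff, Set.mem_setOf_eq, Set.mem_Icc]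
  tauto
end

section
/- Let b ≥ 2 be an integer and z ∈ ℂ. The singleton {z} is exponentially b-nonresonant if and only if Re z ≠ 0. -/
open MeasureTheory Filter Set
open scoped Classical

/-! For a single point `w` the set `Δ` is `{1}`, so nonresonance of `{w}` only asks that
`log_b ‖w‖` be irrational. For `w = exp (t z)` this number is `t · Re z / log b`: it is `0` for
every `t` when `Re z = 0`, and it is `±√2` for `t = √2 log b / |Re z|` otherwise. -/

theorem deltaSet_singleton (w : ℂ) : deltaSet {w} = {1} := by
  ext x
  simp [deltaSet]

theorem mem_span_rat_one_iff (x : ℝ) :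
    x ∈ Submodule.span ℚ {(1 : ℝ)} ↔ x ∈ range ((↑) : ℚ → ℝ) := by
  simp only [Submodule.mem_span_singleton, Rat.smul_one_eq_cast, mem_range]

theorem singleton_inter_sphere_of_nonempty {w : ℂ} {r : ℝ}
    (h : ({w} ∩ {v : ℂ | ‖v‖ = r}).Nonempty) :
    {w} ∩ {v : ℂ | ‖v‖ = r} = {w} ∧ r = ‖w‖ := by
  obtain ⟨v, rfl, hv⟩ := h
  exact ⟨inter_eq_left.2 (singleton_subset_iff.2 hv), hv.symm⟩

theorem bNonresonant_singleton_iff (b : ℕ) {w : ℂ} (hw : w ≠ 0) :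
    BNonresonant b {w} ↔ Irrational (Real.logb b ‖w‖) := by
  have hslice := @singleton_inter_sphere_of_nonempty w
  constructor
  · intro h
    have hne : ({w} ∩ {v : ℂ | ‖v‖ = ‖w‖}).Nonempty := ⟨w, rfl, rfl⟩
    have := (h ‖w‖ (norm_pos_iff.2 hw) hne).2
    rwa [(hslice hne).1, deltaSet_singleton, mem_span_rat_one_iff] at this
  · intro hirr r _ hne
    obtain ⟨hW, rfl⟩ := hslice hne
    rw [hW, deltaSet_singleton, mem_span_rat_one_iff]
    exact ⟨inter_eq_left.2 (singleton_subset_iff.2 ⟨1, Rat.cast_one⟩), hirr⟩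

theorem logb_norm_exp_ofReal_mul (b : ℝ) (t : ℝ) (z : ℂ) :
    Real.logb b ‖Complex.exp (t * z)‖ = t * z.re / Real.log b := by
  rw [Complex.norm_exp, Complex.re_ofReal_mul, Real.logb, Real.log_exp]

theorem expBNonresonant_singleton_iff (b : ℕ) (z : ℂ) :
    ExpBNonresonant b {z} ↔ ∃ t : ℝ, 0 ≤ t ∧ Irrational (t * z.re / Real.log b) := by
  simp only [ExpBNonresonant, image_singleton,
    bNonresonant_singleton_iff b (Complex.exp_ne_zero _), logb_norm_exp_ofReal_mul]

theorem exists_nonneg_irrational_mul {c : ℝ} (hc : c ≠ 0) :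
    ∃ t : ℝ, 0 ≤ t ∧ Irrational (t * c) := by
  refine ⟨√2 / |c|, by positivity, ?_⟩
  rcases abs_choice c with h | h
  · rw [h, div_mul_cancel₀ _ hc]
    exact irrational_sqrt_two
  · rw [h, div_neg, neg_mul, div_mul_cancel₀ _ hc]
    exact irrational_sqrt_two.neg

/-- `{z}` is exponentially `b`-nonresonant iff `Re z ≠ 0`. -/
theorem expNonresonant_singleton_iff (b : ℕ) (hb : 2 ≤ b) (z : ℂ) :
    ExpBNonresonant b {z} ↔ z.re ≠ 0 := by
  rw [expBNonresonant_singleton_iff]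
  constructor
  · rintro ⟨t, -, hirr⟩ hre
    simp [hre] at hirr
  · intro hre
    have hlog : Real.log b ≠ 0 := (Real.log_pos (by exact_mod_cast hb)).ne'
    obtain ⟨t, ht, hirr⟩ := exists_nonneg_irrational_mul (div_ne_zero hre hlog)
    exact ⟨t, ht, by rwa [mul_div_assoc]⟩
end

section
/- Let b ≥ 2 be an integer and let Z ⊂ ℂ be countable and symmetric with respect to the real axis (i.e., z ∈ Z implies z̄ ∈ Z). Then Z is exponentially b-nonresonant if and only if for every z ∈ Z, Re z does not lie in the ℚ-linear span of the set {(ln b / π)·Im w : w ∈ Z, Re w = Re z}. -/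
open MeasureTheory Filter Set
open scoped Classical

/-!
For `t > 0`, the part of `e^{tZ}` on the circle of radius `e^{tc}` is the image of the vertical
line `Z_c = {z ∈ Z | re z = c}`; modulo integers, its `Δ` consists of the numbers
`t (im z - im w) / 2π` with `z, w ∈ Z_c`, and `log_b e^{tc} = t c / log b`.
Pairing `w` with `w̄` puts `t im w / π` into `span_ℚ Δ`, so `re z ∈ span_ℚ {log b / π · im w}`
makes every `t` resonant. Conversely, each of the countably many nonzero numbers
`d = (im z - im w) / 2π` and `d = (re z - y) / log b` (`y` in that span) has `t d ∈ ℚ` for only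
countably many `t`, and any other `t > 0` witnesses nonresonance.
-/
open Real Submodule ComplexConjugate

theorem Submodule.countable_span {R M : Type*} [Semiring R] [Countable R] [AddCommMonoid M]
    [Module R M] {s : Set M} (hs : s.Countable) : (span R s : Set M).Countable := by
  have := hs.to_subtype
  rw [← Subtype.range_coe (s := s)]
  exact Set.countable_coe_iff.mp (inferInstanceAs (Countable (span R (range ((↑) : s → M)))))

theorem Set.Countable.exists_pos_forall_mul_mem_range_ratCast {D : Set ℝ} (hD : D.Countable) :
    ∃ t > 0, ∀ d ∈ D, t * d ∈ range ((↑) : ℚ → ℝ) → d = 0 := by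
  set bad := ⋃ d ∈ D, range fun q : ℚ => (q : ℝ) / d
  have hbad : bad.Countable := hD.biUnion fun _ _ => countable_range _
  obtain ⟨t, ht, hpos⟩ := (hbad.dense_compl ℝ).exists_mem_open isOpen_Ioi nonempty_Ioi
  refine ⟨t, hpos, fun d hd ⟨q, hq⟩ => by_contra fun hd0 => ht ?_⟩
  exact mem_biUnion hd ⟨q, by dsimp only; rw [hq, mul_div_cancel_right₀ _ hd0]⟩

theorem Complex.exists_int_arg_exp (u : ℂ) :
    ∃ m : ℤ, Complex.arg (Complex.exp u) = u.im - m * (2 * π) :=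
  ⟨toIocDiv two_pi_pos (-π) u.im, by rw [Complex.arg_exp, toIocMod, zsmul_eq_mul]⟩

theorem exists_int_one_add_arg_exp_sub_arg_exp (t : ℝ) (z w : ℂ) :
    ∃ k : ℤ, 1 + (Complex.arg (Complex.exp (t * z)) - Complex.arg (Complex.exp (t * w))) /
      (2 * π) = 1 + k + t * (z.im - w.im) / (2 * π) := by
  obtain ⟨m, hm⟩ := Complex.exists_int_arg_exp (t * z)
  obtain ⟨n, hn⟩ := Complex.exists_int_arg_exp (t * w)
  refine ⟨n - m, ?_⟩
  rw [hm, hn, Complex.im_ofReal_mul, Complex.im_ofReal_mul]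
  push_cast
  field_simp
  ring

theorem image_exp_inter_norm_eq {t : ℝ} (ht : 0 < t) (Z : Set ℂ) (c : ℝ) :
    (fun z => Complex.exp (t * z)) '' Z ∩ {v | ‖v‖ = Real.exp (t * c)} =
      (fun z => Complex.exp (t * z)) '' {z ∈ Z | z.re = c} := by
  have hnorm (z : ℂ) : ‖Complex.exp (t * z)‖ = Real.exp (t * c) ↔ z.re = c := by
    rw [Complex.norm_exp, Complex.re_ofReal_mul, Real.exp_eq_exp, mul_right_inj' ht.ne']
  ext v
  constructor
  · rintro ⟨⟨z, hz, rfl⟩, hv⟩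
    exact ⟨z, ⟨hz, (hnorm z).1 hv⟩, rfl⟩
  · rintro ⟨z, ⟨hz, hzc⟩, rfl⟩
    exact ⟨⟨z, hz, rfl⟩, (hnorm z).2 hzc⟩

theorem one_mem_deltaSet {W : Set ℂ} (hW : W.Nonempty) : 1 ∈ deltaSet W :=
  let ⟨w, hw⟩ := hW
  ⟨w, hw, w, hw, by ring⟩

section deltaSet_image_exp

variable (t : ℝ) {S : Set ℂ}

theorem mul_im_div_pi_mem_span_deltaSet {z : ℂ} (hz : z ∈ S) (hz' : conj z ∈ S) :
    t * z.im / π ∈ span ℚ (deltaSet ((fun z => Complex.exp (t * z)) '' S)) := by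
  obtain ⟨k, hk⟩ := exists_int_one_add_arg_exp_sub_arg_exp t z (conj z)
  have hδ : 1 + k + t * (z.im - (conj z).im) / (2 * π) ∈
      deltaSet ((fun z => Complex.exp (t * z)) '' S) :=
    hk ▸ ⟨_, ⟨z, hz, rfl⟩, _, ⟨_, hz', rfl⟩, rfl⟩
  have h1 : (1 : ℝ) ∈ deltaSet ((fun z => Complex.exp (t * z)) '' S) :=
    one_mem_deltaSet ⟨_, z, hz, rfl⟩
  have hsplit : t * z.im / π =
      (1 + k + t * (z.im - (conj z).im) / (2 * π)) - (1 + k : ℚ) • (1 : ℝ) := by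
    rw [Complex.conj_im, Rat.smul_def]
    push_cast
    field_simp
    ring
  rw [hsplit]
  exact sub_mem (subset_span hδ) (smul_mem _ _ (subset_span h1))

theorem deltaSet_image_exp_subset_span :
    deltaSet ((fun z => Complex.exp (t * z)) '' S) ⊆
      span ℚ (insert 1 ((fun w => t * w.im / π) '' S)) := by
  rintro _ ⟨_, ⟨z, hz, rfl⟩, _, ⟨w, hw, rfl⟩, rfl⟩
  obtain ⟨k, hk⟩ := exists_int_one_add_arg_exp_sub_arg_exp t z w
  have hsplit : 1 + k + t * (z.im - w.im) / (2 * π) =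
      (1 + k : ℚ) • (1 : ℝ) + (1 / 2 : ℚ) • (t * z.im / π) - (1 / 2 : ℚ) • (t * w.im / π) := by
    simp only [Rat.smul_def]
    push_cast
    field_simp
    ring
  have hmem {v : ℂ} (hv : v ∈ S) :
      t * v.im / π ∈ span ℚ (insert 1 ((fun w => t * w.im / π) '' S)) :=
    subset_span (mem_insert_of_mem _ ⟨v, hv, rfl⟩)
  rw [hk, hsplit]
  exact sub_mem (add_mem (smul_mem _ _ (subset_span (mem_insert _ _))) (smul_mem _ _ (hmem hz)))
    (smul_mem _ _ (hmem hw))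

theorem deltaSet_image_exp_inter_range_ratCast (hS : S.Nonempty)
    (hgen : ∀ z ∈ S, ∀ w ∈ S, t * (z.im - w.im) / (2 * π) ∈ range ((↑) : ℚ → ℝ) → z = w) :
    deltaSet ((fun z => Complex.exp (t * z)) '' S) ∩ range ((↑) : ℚ → ℝ) = {1} := by
  ext x
  simp only [mem_inter_iff, mem_singleton_iff]
  constructor
  · rintro ⟨⟨_, ⟨z, hz, rfl⟩, _, ⟨w, hw, rfl⟩, rfl⟩, q, hq⟩
    obtain ⟨k, hk⟩ := exists_int_one_add_arg_exp_sub_arg_exp t z w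
    obtain rfl : z = w := hgen z hz w hw ⟨q - 1 - k, by push_cast; linarith⟩
    ring
  · rintro rfl
    exact ⟨one_mem_deltaSet (hS.image _), 1, Rat.cast_one⟩

end deltaSet_image_exp

theorem re_notMem_span_of_expBNonresonant {b : ℕ} (hlog : Real.log b ≠ 0) {Z : Set ℂ}
    (hsym : ∀ z ∈ Z, conj z ∈ Z) (hZ : ExpBNonresonant b Z) {z : ℂ} (hz : z ∈ Z) :
    z.re ∉ span ℚ {x : ℝ | ∃ w ∈ Z, w.re = z.re ∧ x = Real.log b / π * w.im} := by
  obtain ⟨t, ht0, hBN⟩ := hZ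
  intro hmem
  rcases ht0.eq_or_lt with rfl | ht
  · refine (hBN 1 one_pos (by exact ⟨1, ⟨z, hz, by simp⟩, by simp⟩)).2 ?_
    rw [Real.logb_one]
    exact zero_mem _
  have hslice := hBN _ (Real.exp_pos (t * z.re)) ⟨_, ⟨z, hz, rfl⟩, by simp [Complex.norm_exp]⟩
  rw [image_exp_inter_norm_eq ht] at hslice
  apply hslice.2
  have himage : LinearMap.mulLeft ℚ (t / Real.log b) ''
      {x : ℝ | ∃ w ∈ Z, w.re = z.re ∧ x = Real.log b / π * w.im} ⊆
        span ℚ (deltaSet ((fun z => Complex.exp (t * z)) '' {w ∈ Z | w.re = z.re})) := by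
    rintro _ ⟨_, ⟨w, hw, hwre, rfl⟩, rfl⟩
    rw [SetLike.mem_coe, LinearMap.mulLeft_apply,
      show t / Real.log b * (Real.log b / π * w.im) = t * w.im / π by field_simp]
    exact mul_im_div_pi_mem_span_deltaSet t ⟨hw, hwre⟩ ⟨hsym w hw, by simpa using hwre⟩
  have := span_le.2 himage (by rw [span_image]; exact mem_map_of_mem hmem)
  rw [Real.logb, Real.log_exp]
  convert this using 1
  rw [LinearMap.mulLeft_apply]
  ring

theorem expBNonresonant_of_re_notMem_span {b : ℕ} (hlog : Real.log b ≠ 0) {Z : Set ℂ}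
    (hc : Z.Countable)
    (h : ∀ z ∈ Z, z.re ∉ span ℚ {x : ℝ | ∃ w ∈ Z, w.re = z.re ∧ x = Real.log b / π * w.im}) :
    ExpBNonresonant b Z := by
  set A : ℝ → Set ℝ := fun c => {x : ℝ | ∃ w ∈ Z, w.re = c ∧ x = Real.log b / π * w.im}
  have hA (c : ℝ) : (A c).Countable :=
    (hc.image fun w => Real.log b / π * w.im).mono fun _ ⟨w, hw, _, hx⟩ =>
      (⟨w, hw, hx.symm⟩ : _ ∈ (fun w => Real.log b / π * w.im) '' Z)
  obtain ⟨t, ht, hgeneric⟩ := Set.Countable.exists_pos_forall_mul_mem_range_ratCast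
    (((hc.prod hc).image fun p : ℂ × ℂ => (p.1.im - p.2.im) / (2 * π)).union
      (hc.biUnion fun z _ =>
        (countable_span (R := ℚ) (hA z.re)).image fun y => (z.re - y) / Real.log b))
  refine ⟨t, ht.le, fun r hr hne => ?_⟩
  obtain ⟨c, rfl⟩ : ∃ c, r = Real.exp (t * c) :=
    ⟨Real.log r / t, by rw [mul_div_cancel₀ _ ht.ne', Real.exp_log hr]⟩
  rw [image_exp_inter_norm_eq ht] at hne ⊢
  obtain ⟨_, ⟨z₀, ⟨hz₀, rfl⟩, -⟩⟩ := hne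
  refine ⟨deltaSet_image_exp_inter_range_ratCast t (S := {z ∈ Z | z.re = z₀.re})
    ⟨z₀, hz₀, rfl⟩ ?_, fun hmem => ?_⟩
  · rintro z ⟨hz, hzre⟩ w ⟨hw, hwre⟩ hq
    have him := hgeneric _ (Or.inl ⟨(z, w), ⟨hz, hw⟩, rfl⟩) (by rwa [← mul_div_assoc])
    exact Complex.ext (hzre.trans hwre.symm) (by simpa [sub_eq_zero, pi_ne_zero] using him)
  have hΔ : deltaSet ((fun z => Complex.exp (t * z)) '' {z ∈ Z | z.re = z₀.re}) ⊆
      span ℚ (insert 1 (LinearMap.mulLeft ℚ (t / Real.log b) '' A z₀.re)) := by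
    refine (deltaSet_image_exp_subset_span t).trans (span_mono (insert_subset_insert ?_))
    rintro _ ⟨w, ⟨hw, hwre⟩, rfl⟩
    refine ⟨_, ⟨w, hw, hwre, rfl⟩, ?_⟩
    rw [LinearMap.mulLeft_apply]
    field_simp
  rw [Real.logb, Real.log_exp] at hmem
  obtain ⟨q, _, hy', hsum⟩ := mem_span_insert.1 (span_le.2 hΔ hmem)
  rw [span_image] at hy'
  obtain ⟨y, hy, rfl⟩ := hy'
  have hy0 := hgeneric _ (Or.inr (mem_biUnion hz₀ ⟨y, hy, rfl⟩)) ⟨q, by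
    rw [LinearMap.mulLeft_apply, Rat.smul_def, mul_one] at hsum
    field_simp at hsum ⊢
    linarith⟩
  rw [div_eq_zero_iff, sub_eq_zero, or_iff_left hlog] at hy0
  exact h z₀ hz₀ (hy0 ▸ hy)

/-- characterization of exponential `b`-nonresonance for countable,
conjugation-symmetric sets. -/
theorem expNonresonant_iff_re_not_mem_span (b : ℕ) (hb : 2 ≤ b) (Z : Set ℂ)
    (hc : Z.Countable) (hsym : ∀ z ∈ Z, (starRingEnd ℂ) z ∈ Z) :
    ExpBNonresonant b Z ↔ ∀ z ∈ Z,
      z.re ∉ Submodule.span ℚ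
        {x : ℝ | ∃ w ∈ Z, w.re = z.re ∧ x = Real.log b / Real.pi * w.im} := by
  have hlog : Real.log b ≠ 0 := (Real.log_pos (by exact_mod_cast hb)).ne'
  exact ⟨fun hZ _ hz => re_notMem_span_of_expBNonresonant hlog hsym hZ hz,
    expBNonresonant_of_re_notMem_span hlog hc⟩
end

section
/- Let φ be a linear flow on ℝ^d with generator A (so φ_t = e^{tA}), let Z be a nonempty subset of the spectrum σ(A) (eigenvalues of A over ℂ), and let u : Z → ℝ. Then there exists a linear functional H on the space of linear maps ℝ^d → ℝ^d such that H(φ_t) = Σ_{z∈Z} e^{t·Re z}·u(z)·cos(t·Im z) for all t ∈ ℝ. -/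
open MeasureTheory Filter Set
open scoped Classical

/-! If `z` is an eigenvalue of `A` with complex eigenvector `v`, normalized so that `v i = 1`,
then `e^{tA} v = e^{tz} v`, so the real functional `M ↦ (M (Re v))_i` takes the value
`Re (e^{tz}) = e^{t Re z} cos (t Im z)` at `e^{tA}`. The observable realizing the signal is the
`u`-weighted sum of these functionals over `z ∈ Z`. -/

namespace Matrix

open NormedSpace

attribute [local instance] Matrix.linftyOpNormedRing Matrix.linftyOpNormedAlgebra

variable {m n 𝕂 : Type*} [RCLike 𝕂]

theorem exp_mulVec_of_mulVec_eq_smul [Fintype m] [DecidableEq m] {B : Matrix m m 𝕂} {v : m → 𝕂} {z : 𝕂}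
    (hv : B *ᵥ v = z • v) : exp B *ᵥ v = exp z • v := by
  have hpow (n : ℕ) : B ^ n *ᵥ v = z ^ n • v := by
    induction n with
    | zero => simp
    | succ n ih => rw [pow_succ', ← mulVec_mulVec, ih, mulVec_smul, hv, smul_smul, ← pow_succ]
  have hB := (exp_series_hasSum_exp' (𝕂 := 𝕂) B).map (mulVec.addMonoidHomLeft v)
    (continuous_id.matrix_mulVec continuous_const)
  have hz := (exp_series_hasSum_exp' (𝕂 := 𝕂) z).smul_const v
  simp only [Function.comp_def, mulVec.addMonoidHomLeft, AddMonoidHom.coe_mk, ZeroHom.coe_mk,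
    smul_mulVec, hpow, smul_smul] at hB
  exact hB.unique hz

theorem map_algebraMap_exp [Fintype m] [DecidableEq m] (M : Matrix m m ℝ) :
    (exp M).map (algebraMap ℝ 𝕂) = exp (M.map (algebraMap ℝ 𝕂)) :=
  map_exp (Algebra.ofId ℝ 𝕂).mapMatrix (continuous_id.matrix_map RCLike.continuous_ofReal) M

theorem re_map_ofReal_mulVec [Fintype n] (M : Matrix m n ℝ) (v : n → 𝕂) (i : m) :
    RCLike.re ((M.map (algebraMap ℝ 𝕂) *ᵥ v) i) = (M *ᵥ fun j => RCLike.re (v j)) i := by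
  simp [mulVec, dotProduct, map_sum]

end Matrix

open NormedSpace Matrix

theorem exists_normalized_eigenvector {d : ℕ} {A : Matrix (Fin d) (Fin d) ℝ} {z : ℂ}
    (hz : z ∈ realSpectrum A) :
    ∃ (v : Fin d → ℂ) (i : Fin d), A.map (algebraMap ℝ ℂ) *ᵥ v = z • v ∧ v i = 1 := by
  rw [realSpectrum, ← spectrum_toLin', ← Module.End.hasEigenvalue_iff_mem_spectrum] at hz
  obtain ⟨w, hw⟩ := hz.exists_hasEigenvector
  obtain ⟨i, hi⟩ := Function.ne_iff.mp hw.2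
  refine ⟨(w i)⁻¹ • w, i, ?_, inv_mul_cancel₀ hi⟩
  rw [mulVec_smul, ← toLin'_apply, hw.apply_eq_smul, smul_comm]

theorem map_exp_smul_mulVec_of_mulVec_eq_smul {m : Type*} [Fintype m] [DecidableEq m]
    {A : Matrix m m ℝ} {v : m → ℂ} {z : ℂ} (hv : A.map (algebraMap ℝ ℂ) *ᵥ v = z • v) (t : ℝ) :
    (exp (t • A)).map (algebraMap ℝ ℂ) *ᵥ v = Complex.exp (t * z) • v := by
  have htA : (t • A).map (algebraMap ℝ ℂ) = (t : ℂ) • A.map (algebraMap ℝ ℂ) := by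
    ext; simp
  have htv : ((t : ℂ) • A.map (algebraMap ℝ ℂ)) *ᵥ v = (t * z) • v := by
    rw [smul_mulVec, hv, smul_smul]
  rw [map_algebraMap_exp, htA, exp_mulVec_of_mulVec_eq_smul htv, Complex.exp_eq_exp_ℂ]

theorem exists_linearMap_exp_smul_eq {d : ℕ} {A : Matrix (Fin d) (Fin d) ℝ} {z : ℂ}
    (hz : z ∈ realSpectrum A) :
    ∃ H : Matrix (Fin d) (Fin d) ℝ →ₗ[ℝ] ℝ, ∀ t : ℝ,
      H (exp (t • A)) = Real.exp (t * z.re) * Real.cos (t * z.im) := by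
  obtain ⟨v, i, hv, hvi⟩ := exists_normalized_eigenvector hz
  refine ⟨LinearMap.proj i ∘ₗ (mulVecBilin ℝ ℝ).flip fun j => (v j).re, fun t => ?_⟩
  calc (exp (t • A) *ᵥ fun j => (v j).re) i
      = (((exp (t • A)).map (algebraMap ℝ ℂ) *ᵥ v) i).re :=
        (re_map_ofReal_mulVec (𝕂 := ℂ) _ v i).symm
    _ = (Complex.exp (t * z)).re := by
        rw [map_exp_smul_mulVec_of_mulVec_eq_smul hv]; simp [hvi]
    _ = Real.exp (t * z.re) * Real.cos (t * z.im) := by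
        rw [Complex.exp_re, Complex.re_ofReal_mul, Complex.im_ofReal_mul]

theorem exists_observable_realizing_signal_general (d : ℕ) (A : Matrix (Fin d) (Fin d) ℝ)
    (Z : Finset ℂ) (hZ : (Z : Set ℂ) ⊆ realSpectrum A) (u : ℂ → ℝ) :
    ∃ H : Matrix (Fin d) (Fin d) ℝ →ₗ[ℝ] ℝ, ∀ t : ℝ,
      H (NormedSpace.exp (t • A)) =
        ∑ z ∈ Z, Real.exp (t * z.re) * u z * Real.cos (t * z.im) := by
  choose H hH using fun z : Z => exists_linearMap_exp_smul_eq (hZ z.2)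
  refine ⟨∑ z : Z, u z • H z, fun t => ?_⟩
  rw [← Finset.sum_coe_sort Z]
  simp only [LinearMap.coe_sum, Finset.sum_apply, LinearMap.smul_apply, hH, smul_eq_mul]
  exact Finset.sum_congr rfl fun z _ => by ring

/-- realization of prescribed exponential-trigonometric signals by a
linear observable of a linear flow. -/
theorem exists_observable_realizing_signal (d : ℕ) (A : Matrix (Fin d) (Fin d) ℝ)
    (Z : Finset ℂ) (hZ : (Z : Set ℂ) ⊆ realSpectrum A) (hne : Z.Nonempty) (u : ℂ → ℝ) :
    ∃ H : Matrix (Fin d) (Fin d) ℝ →ₗ[ℝ] ℝ, ∀ t : ℝ,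
      H (NormedSpace.exp (t • A)) =
        ∑ z ∈ Z, Real.exp (t * z.re) * u z * Real.cos (t * z.im) :=
  exists_observable_realizing_signal_general d A Z hZ u
end

section
/- Let Ω ⊂ ℝ≥0 be a finite set and f : Ω → ℂ. Then lim_{t→+∞} Re(Σ_{ω∈Ω} f(ω)·e^{iωt}) exists (in ℝ) if and only if f(ω) = 0 for every ω ∈ Ω with ω ≠ 0. -/
/-!
Sample `P t = ∑ ω ∈ Ω, f ω * exp (I * ω * t)` at the times `n * s`, with the step `s > 0` so
small that `|d * s| < π` for every frequency difference `d` that occurs; then there is no aliasing: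
`exp (I * d * s) = 1` only for `d = 0`.
Writing `Re P = (P + conj P) / 2`, the Cesàro means of `Re P (n * s) * exp (-I * ω₀ * n * s)` pick
out the coefficients of the frequencies `ω = ω₀` in `P` and `-ω = ω₀` in `conj P`, i.e. `f ω₀ / 2`
when `ω₀ > 0` and all frequencies are nonnegative. If `Re P` converges, these means tend to `0`.
-/

open MeasureTheory Filter Set
open scoped Classical

open Finset Topology ComplexConjugate

section Cesaro

variable {𝕜 : Type*} [RCLike 𝕜]

theorem tendsto_cesaro_pow_of_ne_one {z : 𝕜} (hz1 : ‖z‖ ≤ 1) (hz : z ≠ 1) :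
    Tendsto (fun N : ℕ => (N⁻¹ : ℝ) • ∑ n ∈ range N, z ^ n) atTop (𝓝 0) := by
  have hbound : ∀ N : ℕ, ‖∑ n ∈ range N, z ^ n‖ ≤ 2 / ‖z - 1‖ := fun N => by
    rw [geom_sum_eq hz, norm_div]
    gcongr
    calc ‖z ^ N - 1‖ ≤ ‖z‖ ^ N + ‖(1 : 𝕜)‖ := by rw [← norm_pow]; exact norm_sub_le _ _
      _ ≤ 2 := by rw [norm_one]; linarith [pow_le_one₀ (norm_nonneg z) hz1 (n := N)]
  refine squeeze_zero_norm (fun N => ?_) (by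
    simpa using (tendsto_inv_atTop_zero.comp tendsto_natCast_atTop_atTop).mul_const (2 / ‖z - 1‖))
  rw [norm_smul, Real.norm_of_nonneg (by positivity)]
  exact mul_le_mul_of_nonneg_left (hbound N) (by positivity)

theorem tendsto_cesaro_pow {z : 𝕜} (hz1 : ‖z‖ ≤ 1) :
    Tendsto (fun N : ℕ => (N⁻¹ : ℝ) • ∑ n ∈ range N, z ^ n) atTop
      (𝓝 (if z = 1 then 1 else 0)) := by
  split_ifs with hz
  · simpa [hz] using (tendsto_const_nhds (x := (1 : 𝕜))).cesaro_smul
  · exact tendsto_cesaro_pow_of_ne_one hz1 hz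

theorem tendsto_cesaro_sum_mul_pow {ι : Type*} (A : Finset ι) (c z : ι → 𝕜)
    (hz : ∀ i ∈ A, ‖z i‖ ≤ 1) :
    Tendsto (fun N : ℕ => (N⁻¹ : ℝ) • ∑ n ∈ range N, ∑ i ∈ A, c i * z i ^ n) atTop
      (𝓝 (∑ i ∈ A with z i = 1, c i)) := by
  have hterm : ∀ i ∈ A, Tendsto (fun N : ℕ => c i * ((N⁻¹ : ℝ) • ∑ n ∈ range N, z i ^ n))
      atTop (𝓝 (if z i = 1 then c i else 0)) := fun i hi => by
    simpa [apply_ite (c i * ·)] using (tendsto_cesaro_pow (hz i hi)).const_mul (c i)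
  rw [sum_filter]
  refine (tendsto_finsetSum A hterm).congr fun N => ?_
  simp only [sum_comm (s := range N), smul_sum, mul_sum, mul_smul_comm]

theorem tendsto_cesaro_mul_pow_zero {u : ℕ → 𝕜} {L : 𝕜} (hu : Tendsto u atTop (𝓝 L))
    {w : 𝕜} (hw1 : ‖w‖ ≤ 1) (hw : w ≠ 1) :
    Tendsto (fun N : ℕ => (N⁻¹ : ℝ) • ∑ n ∈ range N, u n * w ^ n) atTop (𝓝 0) := by
  have hsmall : Tendsto (fun n => (u n - L) * w ^ n) atTop (𝓝 0) := by
    refine squeeze_zero_norm (fun n => ?_) (by simpa using (tendsto_sub_nhds_zero_iff.mpr hu).norm)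
    rw [norm_mul, norm_pow]
    exact mul_le_of_le_one_right (norm_nonneg _) (pow_le_one₀ (norm_nonneg w) hw1)
  have := hsmall.cesaro_smul.add ((tendsto_cesaro_pow_of_ne_one hw1 hw).const_mul L)
  rw [mul_zero, add_zero] at this
  refine this.congr fun N => ?_
  simp only [mul_smul_comm, mul_sum, ← smul_add, ← sum_add_distrib]
  congr 1
  exact sum_congr rfl fun n _ => by ring

theorem sum_add_sum_conj_eq_zero_of_tendsto_re {ι : Type*} (A : Finset ι) (c z : ι → 𝕜)
    (hz : ∀ i ∈ A, ‖z i‖ ≤ 1) {L : ℝ}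
    (hL : Tendsto (fun n : ℕ => RCLike.re (∑ i ∈ A, c i * z i ^ n)) atTop (𝓝 L))
    {w : 𝕜} (hw1 : ‖w‖ ≤ 1) (hw : w ≠ 1) :
    ∑ i ∈ A with z i * w = 1, c i + ∑ i ∈ A with conj (z i) * w = 1, conj (c i) = 0 := by
  have hzw : ∀ i ∈ A, ‖z i * w‖ ≤ 1 := fun i hi => by
    rw [norm_mul]; exact mul_le_one₀ (hz i hi) (norm_nonneg _) hw1
  have hzw' : ∀ i ∈ A, ‖conj (z i) * w‖ ≤ 1 := fun i hi => by
    rw [norm_mul, RCLike.norm_conj]; exact mul_le_one₀ (hz i hi) (norm_nonneg _) hw1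
  have hsplit := ((tendsto_cesaro_sum_mul_pow A c _ hzw).add
    (tendsto_cesaro_sum_mul_pow A (conj ∘ c) _ hzw')).div_const 2
  have hzero := tendsto_cesaro_mul_pow_zero ((RCLike.continuous_ofReal.tendsto L).comp hL) hw1 hw
  have hsame : ∀ N : ℕ, (N⁻¹ : ℝ) • ∑ n ∈ range N, (RCLike.re (∑ i ∈ A, c i * z i ^ n) : 𝕜) * w ^ n
      = ((N⁻¹ : ℝ) • ∑ n ∈ range N, ∑ i ∈ A, c i * (z i * w) ^ n
        + (N⁻¹ : ℝ) • ∑ n ∈ range N, ∑ i ∈ A, (conj ∘ c) i * (conj (z i) * w) ^ n) / 2 := by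
    intro N
    simp only [RCLike.re_eq_add_conj, map_sum, map_mul, map_pow, Function.comp_apply, ← smul_add,
      ← sum_add_distrib, smul_div_assoc, sum_div, add_div, add_mul, sum_mul, mul_pow]
    congr 1
    exact sum_congr rfl fun n _ => sum_congr rfl fun i _ => by ring
  simpa using tendsto_nhds_unique (hsplit.congr fun N => (hsame N).symm) hzero

end Cesaro

open Complex

theorem exists_pos_forall_exp_I_mul_eq_one_iff (D : Finset ℝ) :
    ∃ s : ℝ, 0 < s ∧ ∀ d ∈ D, cexp (I * d * s) = 1 ↔ d = 0 := by
  have hsmall : ∀ᶠ s in 𝓝[>] (0 : ℝ), ∀ d ∈ D, |d * s| < Real.pi := by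
    refine (eventually_all_finset D).mpr fun d _ => ?_
    have hcont : Tendsto (fun s : ℝ => |d * s|) (𝓝[>] 0) (𝓝 0) := by
      simpa using ((continuous_const_mul d).abs.tendsto 0).mono_left nhdsWithin_le_nhds
    exact hcont.eventually_lt_const Real.pi_pos
  obtain ⟨s, hsmall, hs⟩ := (hsmall.and self_mem_nhdsWithin).exists
  refine ⟨s, hs, fun d hd => ⟨fun h => ?_, fun h => by simp [h]⟩⟩
  obtain ⟨hlo, hhi⟩ := abs_lt.mp (hsmall d hd)
  have hlog := log_exp (x := I * d * s) (by simpa using hlo) (by simpa using hhi.le)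
  rw [h, log_one] at hlog
  simpa [hs.ne', I_ne_zero] using hlog.symm

theorem eq_zero_of_tendsto_re_sum_exp (Ω : Finset ℝ) (hΩ : ∀ ω ∈ Ω, 0 ≤ ω) (f : ℝ → ℂ) {L : ℝ}
    (hL : Tendsto (fun t : ℝ => (∑ ω ∈ Ω, f ω * cexp (I * ω * t)).re) atTop (𝓝 L))
    {ω₀ : ℝ} (hω₀ : ω₀ ∈ Ω) (hpos : 0 < ω₀) : f ω₀ = 0 := by
  obtain ⟨s, hs, hexp⟩ := exists_pos_forall_exp_I_mul_eq_one_iff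
    (insert (-ω₀) (Ω.image (· - ω₀) ∪ Ω.image (fun ω => -ω - ω₀)))
  set z : ℝ → ℂ := fun ω => cexp (I * ω * s) with hzdef
  have hnorm : ∀ ω, ‖z ω‖ = 1 := fun ω => by
    rw [show z ω = cexp ((ω * s : ℝ) * I) by simp only [hzdef]; push_cast; ring_nf]
    exact norm_exp_ofReal_mul_I _
  have hmul : ∀ a b, z a * z b = z (a + b) := fun a b => by
    simp only [hzdef, ← Complex.exp_add]; push_cast; ring_nf
  have hconj : ∀ a, conj (z a) = z (-a) := fun a => by
    simp [hzdef, ← Complex.exp_conj]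
  have hpow : ∀ (ω : ℝ) (n : ℕ), cexp (I * ω * ((n * s : ℝ) : ℂ)) = z ω ^ n := fun ω n => by
    simp only [hzdef, ← Complex.exp_nat_mul]; push_cast; ring_nf
  have hseq : Tendsto (fun n : ℕ => (∑ ω ∈ Ω, f ω * z ω ^ n).re) atTop (𝓝 L) := by
    simpa only [Function.comp_def, hpow] using
      hL.comp (tendsto_natCast_atTop_atTop.atTop_mul_const hs)
  have hw : z (-ω₀) ≠ 1 := fun h =>
    hpos.ne' (neg_eq_zero.mp ((hexp _ (mem_insert_self _ _)).mp h))
  have key := sum_add_sum_conj_eq_zero_of_tendsto_re Ω f z (fun ω _ => (hnorm ω).le) hseq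
    (hnorm _).le hw
  have hdiag : Ω.filter (fun ω => z ω * z (-ω₀) = 1) = {ω₀} := by
    ext ω
    simp only [Finset.mem_filter, Finset.mem_singleton, hmul, ← sub_eq_add_neg]
    constructor
    · rintro ⟨hω, h⟩
      exact sub_eq_zero.mp ((hexp _ (mem_insert_of_mem (mem_union_left _
        (mem_image_of_mem _ hω)))).mp h)
    · rintro rfl
      exact ⟨hω₀, by simp [hzdef]⟩
  have hanti : Ω.filter (fun ω => conj (z ω) * z (-ω₀) = 1) = ∅ := by
    refine filter_false_of_mem fun ω hω h => ?_
    rw [hconj, hmul, ← sub_eq_add_neg, hexp _ (mem_insert_of_mem (mem_union_right _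
      (mem_image_of_mem (fun ω => -ω - ω₀) hω)))] at h
    linarith [hΩ ω hω]
  simpa [hdiag, hanti] using key

/-- the real part of a trigonometric polynomial converges at `+∞`
iff all nonzero frequencies have zero coefficients. -/
theorem trig_poly_tendsto_iff (Ω : Finset ℝ) (hΩ : ∀ ω ∈ Ω, 0 ≤ ω) (f : ℝ → ℂ) :
    (∃ L : ℝ, Filter.Tendsto
        (fun t : ℝ => (∑ ω ∈ Ω, f ω * Complex.exp (Complex.I * ω * t)).re)
        Filter.atTop (nhds L)) ↔
      ∀ ω ∈ Ω, ω ≠ 0 → f ω = 0 := by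
  constructor
  · rintro ⟨L, hL⟩ ω hω hne
    exact eq_zero_of_tendsto_re_sum_exp Ω hΩ f hL hω ((hΩ ω hω).lt_of_ne' hne)
  · intro h
    have hconst : ∀ t : ℝ, ∑ ω ∈ Ω, f ω * cexp (I * ω * t) = ∑ ω ∈ Ω, f ω * cexp (I * ω * 0) :=
      fun t => sum_congr rfl fun ω hω => by
        by_cases hω0 : ω = 0
        · simp [hω0]
        · simp [h ω hω hω0]
    exact ⟨_, tendsto_const_nhds.congr fun t => by rw [hconst t]⟩
end
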